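/- arXiv:2404.03091 — 12 statements merged into one kernel-verified Lean document; each statement's English description precedes it below -/
import Mathlib

section
/- Let n ≥ 2 be an integer. Consider the set of all (x, y, γ) with x, y ∈ [0,1]^n and γ ∈ ℝ such that for all 1 ≤ i < j ≤ n the four inequalities x_i + x_j + y_i + y_j ≥ γ, −x_i − x_j + y_i + y_j + 2 ≥ γ, x_i + x_j − y_i − y_j + 2 ≥ γ, and −x_i − x_j − y_i − y_j + 4 ≥ γ hold. Then the maximum value of γ over this set is attained and equals 2. (This is the optimal value of the single-row LP relaxation (TW) of the circle packing problem.) -/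
/-- The optimal value of the single-row LP relaxation (TW) of the circle packing
problem is `2` for all `n ≥ 2`. -/
theorem stmt_0 (n : ℕ) (hn : 2 ≤ n) :
    IsGreatest {γ : ℝ | ∃ x y : Fin n → ℝ,
      (∀ i, 0 ≤ x i ∧ x i ≤ 1) ∧ (∀ i, 0 ≤ y i ∧ y i ≤ 1) ∧
      (∀ i j : Fin n, i < j →
        x i + x j + y i + y j ≥ γ ∧
        -x i - x j + y i + y j + 2 ≥ γ ∧
        x i + x j - y i - y j + 2 ≥ γ ∧
        -x i - x j - y i - y j + 4 ≥ γ)} 2 := by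
  constructor
  · exact ⟨fun _ => 1 / 2, fun _ => 1 / 2, fun _ => by norm_num, fun _ => by norm_num,
      fun _ _ _ => by norm_num⟩
  · rintro γ ⟨x, y, -, -, h⟩
    -- The first and fourth inequalities of any single pair add up to `2 * γ ≤ 4`.
    obtain ⟨h₁, -, -, h₄⟩ := h ⟨0, by omega⟩ ⟨1, by omega⟩ (Fin.mk_lt_mk.mpr zero_lt_one)
    linarith
end

section
/- Let n ≥ 5 be an integer, and set n_x := ⌈n/2⌉, n_y := ⌈n/4⌉, u_i^x := 1/2 if i ≤ n_x and u_i^x := 1 otherwise, u_i^y := 1/2 if i ≤ n_y and u_i^y := 1 otherwise.ter Consider the set of all (x, y, γ) with 0 ≤ x_i ≤ u_i^x and 0 ≤ y_i ≤ u_i^y for all i ∈ {1,…,n}, and γ ∈ ℝ, such that for all 1 ≤ i < j ≤ n: min(u_i^x x_i + u_j^x x_j, 2 u_i^x u_j^x + (u_i^x − 2 u_j^x) x_i + (u_j^x − 2 u_i^x) x_j) + min(u_i^y y_i + u_j^y y_j, 2 u_i^y u_j^y + (u_i^y − 2 u_j^y) y_i + (u_j^y − 2 u_i^y) y_j) ≥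 γ. Then the maximum value of γ over this set is attained and equals 1/2. (This is the optimal value of the LP relaxation (TWbnd).) -/
/-!
Setting every variable to the midpoint of its box, `x_i = u_i/2`, makes both affine pieces
of each envelope equal to `(u_i² + u_j²)/2 ≥ 1/4`, so `γ = 1/2` is feasible. Conversely, for
two variables with the same bound `u` the two affine pieces sum to the constant `2u²`, so
their minimum is at most `u²`; since `n ≥ 5` gives `n_y ≥ 2`, the first two indices have
`u^x = u^y = 1/2` and the constraint for that pair forces `γ ≤ 1/4 + 1/4`.
-/

/-- The concave envelope of `(z₂ - z₁)²` over the box `[0, u₁] × [0, u₂]`. -/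
def sqDiffEnvelope (u₁ u₂ z₁ z₂ : ℝ) : ℝ :=
  min (u₁ * z₁ + u₂ * z₂) (2 * u₁ * u₂ + (u₁ - 2 * u₂) * z₁ + (u₂ - 2 * u₁) * z₂)

theorem sqDiffEnvelope_midpoint (u₁ u₂ : ℝ) :
    sqDiffEnvelope u₁ u₂ (u₁ / 2) (u₂ / 2) = (u₁ ^ 2 + u₂ ^ 2) / 2 := by
  unfold sqDiffEnvelope
  rw [show 2 * u₁ * u₂ + (u₁ - 2 * u₂) * (u₁ / 2) + (u₂ - 2 * u₁) * (u₂ / 2)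
      = u₁ * (u₁ / 2) + u₂ * (u₂ / 2) by ring, min_self]
  ring

theorem sqDiffEnvelope_self_le (u z₁ z₂ : ℝ) : sqDiffEnvelope u u z₁ z₂ ≤ u ^ 2 := by
  unfold sqDiffEnvelope
  have hsum : (u * z₁ + u * z₂) + (2 * u * u + (u - 2 * u) * z₁ + (u - 2 * u) * z₂)
      = 2 * u ^ 2 := by ring
  rcases le_total (u * z₁ + u * z₂) (2 * u * u + (u - 2 * u) * z₁ + (u - 2 * u) * z₂)
    with hle | hle
  · rw [min_eq_left hle]; linarith
  · rw [min_eq_right hle]; linarith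

/-- The optimal value of the single-row LP relaxation (TWbnd) of the circle packing
problem (with tightened variable bounds `u^x`, `u^y`) is `1/2` for all `n ≥ 5`.
Here indices of `Fin n` are 0-based, so the 1-based condition `i ≤ n_x` reads
`(i : ℕ) + 1 ≤ n_x`; `n_x = ⌈n/2⌉ = (n+1)/2` and `n_y = ⌈n/4⌉ = (n+3)/4` in ℕ. -/
theorem stmt_1 (n : ℕ) (hn : 5 ≤ n)
    (nx ny : ℕ) (hnx : nx = (n + 1) / 2) (hny : ny = (n + 3) / 4)
    (ux uy : Fin n → ℝ)
    (hux : ∀ i : Fin n, ux i = if (i : ℕ) + 1 ≤ nx then 1/2 else 1)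
    (huy : ∀ i : Fin n, uy i = if (i : ℕ) + 1 ≤ ny then 1/2 else 1) :
    IsGreatest {γ : ℝ | ∃ x y : Fin n → ℝ,
      (∀ i, 0 ≤ x i ∧ x i ≤ ux i) ∧ (∀ i, 0 ≤ y i ∧ y i ≤ uy i) ∧
      (∀ i j : Fin n, i < j →
        min (ux i * x i + ux j * x j)
            (2 * ux i * ux j + (ux i - 2 * ux j) * x i + (ux j - 2 * ux i) * x j)
        + min (uy i * y i + uy j * y j)
            (2 * uy i * uy j + (uy i - 2 * uy j) * y i + (uy j - 2 * uy i) * y j)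
        ≥ γ)} (1/2) := by
  have hux_ge : ∀ i, 1/2 ≤ ux i := fun i => by rw [hux]; split <;> norm_num
  have huy_ge : ∀ i, 1/2 ≤ uy i := fun i => by rw [huy]; split <;> norm_num
  constructor
  · refine ⟨fun i => ux i / 2, fun i => uy i / 2,
      fun i => ⟨by linarith [hux_ge i], by linarith [hux_ge i]⟩,
      fun i => ⟨by linarith [huy_ge i], by linarith [huy_ge i]⟩, fun i j _ => ?_⟩
    change sqDiffEnvelope _ _ _ _ + sqDiffEnvelope _ _ _ _ ≥ _
    rw [sqDiffEnvelope_midpoint, sqDiffEnvelope_midpoint]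
    nlinarith [hux_ge i, hux_ge j, huy_ge i, huy_ge j]
  · rintro γ ⟨x, y, -, -, hγ⟩
    let i₀ : Fin n := ⟨0, by omega⟩
    let i₁ : Fin n := ⟨1, by omega⟩
    have hx₀ : ux i₀ = 1/2 := by rw [hux, if_pos (by simp [i₀]; omega)]
    have hx₁ : ux i₁ = 1/2 := by rw [hux, if_pos (by simp [i₁]; omega)]
    have hy₀ : uy i₀ = 1/2 := by rw [huy, if_pos (by simp [i₀]; omega)]
    have hy₁ : uy i₁ = 1/2 := by rw [huy, if_pos (by simp [i₁]; omega)]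
    have hpair : sqDiffEnvelope (ux i₀) (ux i₁) (x i₀) (x i₁)
        + sqDiffEnvelope (uy i₀) (uy i₁) (y i₀) (y i₁) ≥ γ :=
      hγ i₀ i₁ (by simp [i₀, i₁, Fin.lt_def])
    rw [hx₀, hx₁, hy₀, hy₁] at hpair
    linarith [sqDiffEnvelope_self_le (1/2) (x i₀) (x i₁),
      sqDiffEnvelope_self_le (1/2) (y i₀) (y i₁)]
end

section
/- Let n ≥ 2 be an integer. Consider the set of all (x, y, γ) with 0 ≤ x_1 ≤ x_2 ≤ … ≤ x_n ≤ 1, y ∈ [0,1]^n, and γ ∈ ℝ, such that for all 1 ≤ i < j ≤ n: x_j − x_i + y_i + y_j ≥ γ and x_j − x_i − y_i − y_j + 2 ≥ γ. Then the maximum value of γ over this set is attained and equals 1 + 1/(n − 1). (This is the optimal value of the LP relaxation (TWord).) -/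
/-!
Adding the two constraints for a consecutive pair `i, i + 1` eliminates `y`, leaving
`x_{i+1} - x_i ≥ γ - 1`; telescoping over the `n - 1` consecutive pairs gives
`(n - 1)(γ - 1) ≤ x_n - x_1 ≤ 1`. Equality is attained by the equally spaced points
`x_i = (i - 1)/(n - 1)` with all `y_i = 1/2`.
-/

theorem nsmul_le_sub_of_le_succ_sub {α : Type*} [AddCommGroup α] [PartialOrder α]
    [IsOrderedAddMonoid α] {m : ℕ} (x : Fin (m + 1) → α) {d : α}
    (h : ∀ i : Fin m, d ≤ x i.succ - x i.castSucc) : m • d ≤ x (Fin.last m) - x 0 := by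
  induction m with
  | zero => simp
  | succ m ih =>
    have hinit := ih (fun i => x i.castSucc) fun i => h i.castSucc
    have hlast := h (Fin.last m)
    rw [Fin.succ_last] at hlast
    calc (m + 1) • d = m • d + d := succ_nsmul d m
      _ ≤ (x (Fin.last m).castSucc - x 0) + (x (Fin.last (m + 1)) - x (Fin.last m).castSucc) :=
          add_le_add hinit hlast
      _ = x (Fin.last (m + 1)) - x 0 := by abel

theorem le_one_add_inv_of_feasible {m : ℕ} (hm : 0 < m) {x y : Fin (m + 1) → ℝ} {γ : ℝ}
    (hx : ∀ i, 0 ≤ x i ∧ x i ≤ 1)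
    (hxy : ∀ i j : Fin (m + 1), i < j →
      x j - x i + y i + y j ≥ γ ∧ x j - x i - y i - y j + 2 ≥ γ) :
    γ ≤ 1 + 1 / m := by
  have hstep (i : Fin m) : γ - 1 ≤ x i.succ - x i.castSucc := by
    obtain ⟨h₁, h₂⟩ := hxy _ _ i.castSucc_lt_succ
    linarith
  have htotal : m * (γ - 1) ≤ 1 := by
    have := nsmul_le_sub_of_le_succ_sub x hstep
    rw [nsmul_eq_mul] at this
    linarith [(hx (Fin.last m)).2, (hx 0).1]
  have hm' : (0 : ℝ) < m := by exact_mod_cast hm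
  rw [← sub_le_iff_le_add', le_div_iff₀ hm']
  linarith

/-- The optimal value of the single-row LP relaxation (TWord) of the circle packing
problem (with order constraints `0 ≤ x_1 ≤ … ≤ x_n ≤ 1`) is `1 + 1/(n-1)` for `n ≥ 2`. -/
theorem stmt_2 (n : ℕ) (hn : 2 ≤ n) :
    IsGreatest {γ : ℝ | ∃ x y : Fin n → ℝ,
      (∀ i, 0 ≤ x i ∧ x i ≤ 1) ∧ Monotone x ∧
      (∀ i, 0 ≤ y i ∧ y i ≤ 1) ∧
      (∀ i j : Fin n, i < j →
        x j - x i + y i + y j ≥ γ ∧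
        x j - x i - y i - y j + 2 ≥ γ)}
    (1 + 1 / ((n : ℝ) - 1)) := by
  obtain ⟨m, rfl⟩ : ∃ m, n = m + 1 := ⟨n - 1, by omega⟩
  have hm : 0 < m := by omega
  have hm' : (0 : ℝ) < m := by exact_mod_cast hm
  rw [show ((m + 1 : ℕ) : ℝ) - 1 = m by push_cast; ring]
  refine ⟨⟨fun i => (i : ℝ) / m, fun _ => 1 / 2, fun i => ⟨by positivity, ?_⟩,
    fun i j hij => ?_, fun _ => by norm_num, fun i j hij => ?_⟩,
    fun γ ⟨x, y, hx, _, _, hxy⟩ => le_one_add_inv_of_feasible hm hx hxy⟩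
  · rw [div_le_one hm']
    exact_mod_cast Nat.lt_succ_iff.mp i.isLt
  · dsimp only
    gcongr
    exact_mod_cast hij
  · have hgap : 1 / (m : ℝ) ≤ (j : ℝ) / m - (i : ℝ) / m := by
      rw [← sub_div]
      gcongr
      have : (i : ℕ) + 1 ≤ j := hij
      linarith [show ((i : ℕ) : ℝ) + 1 ≤ (j : ℕ) by exact_mod_cast this]
    constructor <;> linarith
end

section
/- Let n ≥ 5 be an integer, and set n_x := ⌈n/2⌉, n_y := ⌈n/4⌉, u_i^x := 1/2 if i ≤ n_x and u_i^x := 1 otherwise, u_i^y := 1/2 if i ≤ n_y and u_i^y := 1 otherwise. For 1 ≤ i < j ≤ n let D_ij := {(a,b) ∈ ℝ²: 0 ≤ a ≤ u_i^x, 0 ≤ b ≤ u_j^x, and additionally a ≤ b whenever j ≤ n_y or i ≥ n_y + 1}, and let R_ij := [0, u_i^y] × [0, u_j^y]. Consider the set of all (x, y, γ) with 0 ≤ x_i ≤ u_i^x and 0 ≤ y_i ≤ u_i^y for all i, x_i ≤ x_{i+1} for all i ∈ {1,…,n−1} \ {n_y}, and such that for all 1 ≤ i < j ≤ n: conc_{D_ij}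 f (x_i, x_j) + conc_{R_ij} f (y_i, y_j) ≥ γ, where f(a,b) := (b − a)^2 and conc_D f denotes the concave envelope of f over D. Then the maximum value of γ over this set is attained and equals (1/4)(1 + 1/⌊(n−1)/4⌋). (This is the optimal value of the LP relaxation (TWcomb).) -/
/-!
With `m = ⌊(n-1)/4⌋`, the indices `0, …, m` (0-based) form the first block of `y` and lie in
the first block of `x`. For consecutive `k < k + 1 ≤ m` the order constraint turns `D` into the
triangle `0 ≤ a ≤ b ≤ 1/2`, on which the concave envelope of `(b - a)²` is the linear function
`(b - a)/2`, while on the square `[0, 1/2]²` it is at most `1/4`. Hence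
`γ ≤ (x_{k+1} - x_k)/2 + 1/4`, and summing over `k < m` telescopes to
`m γ ≤ x_m / 2 + m / 4 ≤ (1 + m)/4`.

The bound is attained by letting `x` climb from `0` to `1/2` in `m` equal steps on the first block
with `y = 1/4` there, and `x = 0`, `y = 3/4` beyond it: pairs inside the block get exactly
`(j - i)/(4m) + 1/4`, and every other pair already has a `y`-envelope of at least `1/2`.
-/

open Set

/-- The concave envelope of `f` over `D ⊆ ℝ²`, described as the pointwise infimum
of all affine functions majorizing `f` on `D`. -/
noncomputable def concEnv (D : Set (ℝ × ℝ)) (f : ℝ × ℝ → ℝ) (z : ℝ × ℝ) : ℝ :=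
  sInf {v : ℝ | ∃ c₀ c₁ c₂ : ℝ, (∀ w ∈ D, f w ≤ c₀ + c₁ * w.1 + c₂ * w.2) ∧
    v = c₀ + c₁ * z.1 + c₂ * z.2}

section ConcEnv

variable {D : Set (ℝ × ℝ)} {f : ℝ × ℝ → ℝ} {z : ℝ × ℝ}

theorem concEnv_le_of_forall_le {c₀ c₁ c₂ : ℝ} (hz : z ∈ D)
    (hmaj : ∀ w ∈ D, f w ≤ c₀ + c₁ * w.1 + c₂ * w.2) :
    concEnv D f z ≤ c₀ + c₁ * z.1 + c₂ * z.2 :=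
  csInf_le ⟨f z, by rintro _ ⟨a₀, a₁, a₂, hm, rfl⟩; exact hm z hz⟩ ⟨c₀, c₁, c₂, hmaj, rfl⟩

theorem concEnv_le_const {C : ℝ} (hz : z ∈ D) (h : ∀ w ∈ D, f w ≤ C) : concEnv D f z ≤ C := by
  simpa using concEnv_le_of_forall_le (c₀ := C) (c₁ := 0) (c₂ := 0) hz (by simpa using h)

theorem sum_mul_le_concEnv {ι : Type*} {s : Finset ι} {w : ι → ℝ} {v : ι → ℝ × ℝ}
    (hbdd : BddAbove (f '' D)) (hw₀ : ∀ i ∈ s, 0 ≤ w i) (hw₁ : ∑ i ∈ s, w i = 1)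
    (hv : ∀ i ∈ s, v i ∈ D) (hz : ∑ i ∈ s, w i • v i = z) :
    ∑ i ∈ s, w i * f (v i) ≤ concEnv D f z := by
  obtain ⟨C, hC⟩ := hbdd
  refine le_csInf ⟨C + 0 * z.1 + 0 * z.2, C, 0, 0, fun w hw => ?_, rfl⟩ ?_
  · simpa using hC ⟨w, hw, rfl⟩
  rintro _ ⟨c₀, c₁, c₂, hmaj, rfl⟩
  subst hz
  calc ∑ i ∈ s, w i * f (v i)
      ≤ ∑ i ∈ s, w i * (c₀ + c₁ * (v i).1 + c₂ * (v i).2) :=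
        Finset.sum_le_sum fun i hi => mul_le_mul_of_nonneg_left (hmaj _ (hv i hi)) (hw₀ i hi)
    _ = c₀ * ∑ i ∈ s, w i + c₁ * ∑ i ∈ s, w i * (v i).1 + c₂ * ∑ i ∈ s, w i * (v i).2 := by
        simp only [Finset.mul_sum, ← Finset.sum_add_distrib]
        exact Finset.sum_congr rfl fun i _ => by ring
    _ = _ := by simp [hw₁, Prod.fst_sum, Prod.snd_sum]

theorem le_concEnv_self (hbdd : BddAbove (f '' D)) (hz : z ∈ D) : f z ≤ concEnv D f z := by
  simpa using sum_mul_le_concEnv (s := {()}) (w := 1) (v := fun _ => z) hbdd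
    (by simp) (by simp) (by simp [hz]) (by simp)

end ConcEnv

def sqDiff (p : ℝ × ℝ) : ℝ := (p.2 - p.1) ^ 2

theorem continuous_sqDiff : Continuous sqDiff := by unfold sqDiff; fun_prop

theorem bddAbove_sqDiff_image {D : Set (ℝ × ℝ)} (hD : Bornology.IsBounded D) :
    BddAbove (sqDiff '' D) :=
  (hD.isCompact_closure.bddAbove_image continuous_sqDiff.continuousOn).mono
    (image_mono subset_closure)

theorem concEnv_sqDiff_nonneg {D : Set (ℝ × ℝ)} {z : ℝ × ℝ} (hD : Bornology.IsBounded D)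
    (hz : z ∈ D) : 0 ≤ concEnv D sqDiff z :=
  (sq_nonneg _).trans (le_concEnv_self (bddAbove_sqDiff_image hD) hz)

/-- The paper's `D_ij`: the rectangle `[0, u] × [0, v]`, or its part above the diagonal when `P`
holds. -/
def cutBox (u v : ℝ) (P : Prop) : Set (ℝ × ℝ) :=
  {p | 0 ≤ p.1 ∧ p.1 ≤ u ∧ 0 ≤ p.2 ∧ p.2 ≤ v ∧ (P → p.1 ≤ p.2)}

section Envelopes

variable {u v : ℝ} {P : Prop} {z : ℝ × ℝ}

theorem isBounded_cutBox : Bornology.IsBounded (cutBox u v P) :=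
  ((Metric.isBounded_Icc 0 u).prod (Metric.isBounded_Icc 0 v)).subset
    fun _ ⟨h₁, h₂, h₃, h₄, _⟩ => ⟨⟨h₁, h₂⟩, h₃, h₄⟩

theorem concEnv_sqDiff_cutBox (hP : P) (hv : 0 < v) (hvu : v ≤ u) (hz : z ∈ cutBox u v P) :
    concEnv (cutBox u v P) sqDiff z = v * (z.2 - z.1) := by
  have ⟨hz₁, _, _, hz₂, hz₁₂⟩ := hz
  replace hz₁₂ := hz₁₂ hP
  apply le_antisymm
  · have hmaj : ∀ w ∈ cutBox u v P, sqDiff w ≤ 0 + -v * w.1 + v * w.2 := by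
      rintro w ⟨h₁, -, -, h₄, h₅⟩
      have := h₅ hP
      unfold sqDiff; nlinarith
    have := concEnv_le_of_forall_le hz hmaj
    linarith
  · -- barycentric coordinates of `z` in the triangle `(0, 0), (v, v), (0, v)`
    have := sum_mul_le_concEnv (D := cutBox u v P) (z := z) (s := Finset.univ)
      (w := ![1 - z.2 / v, z.1 / v, (z.2 - z.1) / v]) (v := ![(0, 0), (v, v), (0, v)])
      (bddAbove_sqDiff_image isBounded_cutBox) ?_ ?_ ?_ ?_
    · rw [mul_comm]
      simpa [Fin.sum_univ_three, sqDiff, field] using this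
    · intro i _
      fin_cases i <;> simp
      exacts [(div_le_one hv).2 hz₂, by positivity, div_nonneg (by linarith) hv.le]
    · simp [Fin.sum_univ_three]; field_simp; ring
    · intro i _
      fin_cases i <;> simp [cutBox, hv.le, hvu, hv.le.trans hvu]
    · ext
      · simp [Fin.sum_univ_three, hv.ne']
      · simp [Fin.sum_univ_three]
        field_simp
        ring

theorem concEnv_sqDiff_square_le (hz : z ∈ Icc 0 u ×ˢ Icc 0 u) :
    concEnv (Icc 0 u ×ˢ Icc 0 u) sqDiff z ≤ u ^ 2 :=
  concEnv_le_const hz fun _ ⟨⟨h₁, h₂⟩, h₃, h₄⟩ => by unfold sqDiff; nlinarith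

end Envelopes

theorem isBounded_Icc_prod_Icc (a b c d : ℝ) : Bornology.IsBounded (Icc a b ×ˢ Icc c d) :=
  (Metric.isBounded_Icc a b).prod (Metric.isBounded_Icc c d)

theorem sq_le_concEnv_sqDiff_square_center {u : ℝ} (hu : 0 ≤ u) :
    u ^ 2 ≤ concEnv (Icc 0 u ×ˢ Icc 0 u) sqDiff (u / 2, u / 2) := by
  refine le_trans (le_of_eq ?_) (sum_mul_le_concEnv (s := Finset.univ) (w := ![1 / 2, 1 / 2])
    (v := ![(0, u), (u, 0)]) (bddAbove_sqDiff_image (isBounded_Icc_prod_Icc _ _ _ _))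
    (by simp) (by norm_num) (by simp [Fin.forall_fin_two, hu]) (by ext <;> simp <;> ring))
  simp [sqDiff]
  ring

theorem half_le_concEnv_sqDiff_rect :
    1 / 2 ≤ concEnv (Icc 0 (1 / 2) ×ˢ Icc 0 1) sqDiff (1 / 4, 3 / 4) := by
  refine le_trans (le_of_eq ?_) (sum_mul_le_concEnv (s := Finset.univ)
    (w := ![1 / 2, 1 / 2]) (v := ![(0, 1), (1 / 2, 1 / 2)])
    (bddAbove_sqDiff_image (isBounded_Icc_prod_Icc _ _ _ _))
    (by simp) (by norm_num) (by norm_num [Fin.forall_fin_two]) (by ext <;> norm_num))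
  norm_num [sqDiff]

theorem half_le_concEnv_sqDiff_unit_square :
    1 / 2 ≤ concEnv (Icc 0 1 ×ˢ Icc 0 1) sqDiff (3 / 4, 3 / 4) := by
  refine le_trans (le_of_eq ?_) (sum_mul_le_concEnv (s := Finset.univ)
    (w := ![1 / 4, 1 / 4, 1 / 2]) (v := ![(1, 0), (0, 1), (1, 1)])
    (bddAbove_sqDiff_image (isBounded_Icc_prod_Icc _ _ _ _))
    (by simp [Fin.forall_fin_succ]) (by simp [Fin.sum_univ_three]; norm_num)
    (by norm_num [Fin.forall_fin_succ]) (by ext <;> simp [Fin.sum_univ_three] <;> norm_num))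
  simp [sqDiff, Fin.sum_univ_three]
  norm_num

theorem mul_le_of_forall_le_succ_sub {n m : ℕ} (hmn : m < n) {x : Fin n → ℝ} {γ c d : ℝ}
    (h : ∀ k (hk : k < m), γ ≤ c * (x ⟨k + 1, by omega⟩ - x ⟨k, by omega⟩) + d) :
    m * γ ≤ c * (x ⟨m, hmn⟩ - x ⟨0, by omega⟩) + m * d := by
  induction m with
  | zero => simp
  | succ m ih =>
    have := ih (by omega) fun k hk => h k (by omega)
    have := h m (by omega)
    push_cast
    linarith

/-- The paper's bound `u_i` for the threshold `t` (`n_x` or `n_y`), at the 0-based index `i`. -/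
noncomputable def ubound (t i : ℕ) : ℝ := if i + 1 ≤ t then 1 / 2 else 1

theorem ubound_of_lt {t i : ℕ} (h : i < t) : ubound t i = 1 / 2 := if_pos h

theorem ubound_of_le {t i : ℕ} (h : t ≤ i) : ubound t i = 1 := if_neg (by omega)

theorem half_le_ubound (t i : ℕ) : 1 / 2 ≤ ubound t i := by
  unfold ubound; split_ifs <;> norm_num

noncomputable def optimalX (m i : ℕ) : ℝ := if i ≤ m then i / (2 * m) else 0

noncomputable def optimalY (m i : ℕ) : ℝ := if i ≤ m then 1 / 4 else 3 / 4

section Witness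

variable {m i : ℕ}

theorem optimalX_mem (t : ℕ) : 0 ≤ optimalX m i ∧ optimalX m i ≤ ubound t i := by
  refine ⟨by unfold optimalX; split_ifs <;> positivity, le_trans ?_ (half_le_ubound t i)⟩
  unfold optimalX
  split_ifs with h
  · exact div_le_of_le_mul₀ (by positivity) (by norm_num) (by linarith [(Nat.cast_le (α := ℝ)).2 h])
  · norm_num

theorem optimalY_mem : 0 ≤ optimalY m i ∧ optimalY m i ≤ ubound (m + 1) i := by
  unfold optimalY ubound
  split_ifs <;> norm_num
  omega

theorem optimalX_le_of_le {j : ℕ} (hij : i ≤ j) (h : j ≤ m ∨ m < i) :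
    optimalX m i ≤ optimalX m j := by
  unfold optimalX
  split_ifs with h₁ h₂ h₂
  · gcongr
  · omega
  · omega
  · rfl

end Witness

theorem twcomb_value_le_optimal {nx m i j : ℕ} (hm : 1 ≤ m) (hmx : m + 1 ≤ nx) (hij : i < j) :
    1 / 4 * (1 + 1 / (m : ℝ)) ≤
      concEnv (cutBox (ubound nx i) (ubound nx j) (j + 1 ≤ m + 1 ∨ i + 1 ≥ m + 1 + 1)) sqDiff
          (optimalX m i, optimalX m j) +
        concEnv (Icc 0 (ubound (m + 1) i) ×ˢ Icc 0 (ubound (m + 1) j)) sqDiff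
          (optimalY m i, optimalY m j) := by
  have hxD : (optimalX m i, optimalX m j) ∈
      cutBox (ubound nx i) (ubound nx j) (j + 1 ≤ m + 1 ∨ i + 1 ≥ m + 1 + 1) :=
    ⟨(optimalX_mem nx).1, (optimalX_mem nx).2, (optimalX_mem nx).1, (optimalX_mem nx).2,
      fun h => optimalX_le_of_le hij.le (by omega)⟩
  rcases le_or_gt j m with hjm | hmj
  · have hux : ∀ k ≤ j, ubound nx k = 1 / 2 := fun k hk => ubound_of_lt (by omega)
    have hx := concEnv_sqDiff_cutBox (Or.inl (by omega)) (by norm_num [hux j le_rfl])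
      (by rw [hux i hij.le, hux j le_rfl]) hxD
    have hy := sq_le_concEnv_sqDiff_square_center (u := 1 / 2) (by norm_num)
    rw [show (1 / 2 : ℝ) / 2 = 1 / 4 by norm_num] at hy
    have hji : (1 : ℝ) ≤ j - i := by
      have : ((i + 1 : ℕ) : ℝ) ≤ j := by exact_mod_cast hij
      push_cast at this; linarith
    rw [hx, hux j le_rfl, ubound_of_lt (show i < m + 1 by omega),
      ubound_of_lt (show j < m + 1 by omega), optimalX, optimalX, if_pos (by omega), if_pos hjm,
      optimalY, optimalY, if_pos (by omega), if_pos hjm, ← sub_div]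
    calc 1 / 4 * (1 + 1 / (m : ℝ)) = 1 / 2 * (1 / (2 * m)) + (1 / 2) ^ 2 := by ring
      _ ≤ _ := add_le_add (by gcongr) hy
  · have hm' : (1 : ℝ) ≤ m := by exact_mod_cast hm
    have : 1 / 4 * (1 + 1 / (m : ℝ)) ≤ 1 / 2 := by
      have : 1 / (m : ℝ) ≤ 1 := (div_le_one (by positivity)).2 hm'
      linarith
    refine this.trans (le_add_of_nonneg_of_le (concEnv_sqDiff_nonneg isBounded_cutBox hxD) ?_)
    rw [ubound_of_le (show m + 1 ≤ j by omega), optimalY, optimalY, if_neg (show ¬ j ≤ m by omega)]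
    rcases le_or_gt i m with him | hmi
    · rw [ubound_of_lt (show i < m + 1 by omega), if_pos him]
      exact half_le_concEnv_sqDiff_rect
    · rw [ubound_of_le (show m + 1 ≤ i by omega), if_neg (show ¬ i ≤ m by omega)]
      exact half_le_concEnv_sqDiff_unit_square

theorem le_twcomb_value {n nx m : ℕ} (hm : 1 ≤ m) (hmn : m < n) (hmx : m + 1 ≤ nx)
    {D R : Fin n → Fin n → Set (ℝ × ℝ)}
    (hD : ∀ i j : Fin n, i < j → D i j = cutBox (ubound nx i) (ubound nx j)
      ((j : ℕ) + 1 ≤ m + 1 ∨ (i : ℕ) + 1 ≥ m + 1 + 1))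
    (hR : ∀ i j : Fin n, i < j → R i j = Icc 0 (ubound (m + 1) i) ×ˢ Icc 0 (ubound (m + 1) j))
    {x y : Fin n → ℝ} (hx : ∀ i, 0 ≤ x i ∧ x i ≤ ubound nx i)
    (hy : ∀ i, 0 ≤ y i ∧ y i ≤ ubound (m + 1) i)
    (hmono : ∀ i : Fin n, ∀ h : (i : ℕ) + 1 < n, (i : ℕ) + 1 ≠ m + 1 → x i ≤ x ⟨i + 1, h⟩)
    {γ : ℝ} (hγ : ∀ i j, i < j →
      concEnv (D i j) sqDiff (x i, x j) + concEnv (R i j) sqDiff (y i, y j) ≥ γ) :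
    γ ≤ 1 / 4 * (1 + 1 / m) := by
  have hpair : ∀ i j : Fin n, i < j → (j : ℕ) ≤ m → x i ≤ x j →
      γ ≤ 1 / 2 * (x j - x i) + 1 / 4 := by
    intro i j hij hjm hxij
    have hux : ∀ k : Fin n, k ≤ j → ubound nx k = 1 / 2 ∧ ubound (m + 1) k = 1 / 2 :=
      fun k hk => ⟨ubound_of_lt (by omega), ubound_of_lt (by omega)⟩
    have hxD : (x i, x j) ∈
        cutBox (1 / 2) (1 / 2) ((j : ℕ) + 1 ≤ m + 1 ∨ (i : ℕ) + 1 ≥ m + 1 + 1) :=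
      ⟨(hx i).1, (hux i hij.le).1 ▸ (hx i).2, (hx j).1, (hux j le_rfl).1 ▸ (hx j).2, fun _ => hxij⟩
    have hyR : (y i, y j) ∈ Icc 0 (1 / 2) ×ˢ Icc 0 (1 / 2) :=
      ⟨⟨(hy i).1, (hux i hij.le).2 ▸ (hy i).2⟩, (hy j).1, (hux j le_rfl).2 ▸ (hy j).2⟩
    calc γ ≤ concEnv (D i j) sqDiff (x i, x j) + concEnv (R i j) sqDiff (y i, y j) := hγ i j hij
      _ = concEnv (cutBox (1 / 2) (1 / 2) _) sqDiff (x i, x j) +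
          concEnv (Icc 0 (1 / 2) ×ˢ Icc 0 (1 / 2)) sqDiff (y i, y j) := by
        rw [hD i j hij, hR i j hij, (hux i hij.le).1, (hux j le_rfl).1, (hux i hij.le).2,
          (hux j le_rfl).2]
      _ ≤ 1 / 2 * (x j - x i) + (1 / 2) ^ 2 :=
        add_le_add (concEnv_sqDiff_cutBox (Or.inl (by omega)) (by norm_num) le_rfl hxD).le
          (concEnv_sqDiff_square_le hyR)
      _ = _ := by norm_num
  have hstep : ∀ k (hk : k < m),
      γ ≤ 1 / 2 * (x ⟨k + 1, by omega⟩ - x ⟨k, by omega⟩) + 1 / 4 := fun k hk =>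
    hpair _ _ (Fin.mk_lt_mk.2 k.lt_succ_self) hk (hmono ⟨k, by omega⟩ _ (by simp only; omega))
  have hx₀ := (hx ⟨0, by omega⟩).1
  have hxm : x ⟨m, hmn⟩ ≤ 1 / 2 := (hx _).2.trans_eq (ubound_of_lt (by simpa))
  have := mul_le_of_forall_le_succ_sub hmn hstep
  have hm' : (0 : ℝ) < m := by exact_mod_cast hm
  rw [← mul_le_mul_iff_right₀ hm']
  calc m * γ ≤ 1 / 4 + m / 4 := by linarith
    _ = _ := by field_simp; ring

/-- Indices of `Fin n` are 0-based, so the 1-based condition `i ≤ n_x` reads `(i : ℕ) + 1 ≤ n_x`;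
`n_x = ⌈n/2⌉ = (n+1)/2`, `n_y = ⌈n/4⌉ = (n+3)/4`, and `⌊(n-1)/4⌋ = (n-1)/4` in ℕ. -/
theorem stmt_3 (n : ℕ) (hn : 5 ≤ n)
    (nx ny : ℕ) (hnx : nx = (n + 1) / 2) (hny : ny = (n + 3) / 4)
    (ux uy : Fin n → ℝ)
    (hux : ∀ i : Fin n, ux i = if (i : ℕ) + 1 ≤ nx then 1/2 else 1)
    (huy : ∀ i : Fin n, uy i = if (i : ℕ) + 1 ≤ ny then 1/2 else 1)
    (f : ℝ × ℝ → ℝ) (hf : ∀ p, f p = (p.2 - p.1)^2)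
    (D : Fin n → Fin n → Set (ℝ × ℝ))
    (hD : ∀ i j : Fin n, i < j → D i j =
      {p : ℝ × ℝ | 0 ≤ p.1 ∧ p.1 ≤ ux i ∧ 0 ≤ p.2 ∧ p.2 ≤ ux j ∧
        (((j : ℕ) + 1 ≤ ny ∨ (i : ℕ) + 1 ≥ ny + 1) → p.1 ≤ p.2)})
    (R : Fin n → Fin n → Set (ℝ × ℝ))
    (hR : ∀ i j : Fin n, i < j → R i j = Set.Icc 0 (uy i) ×ˢ Set.Icc 0 (uy j)) :
    IsGreatest {γ : ℝ | ∃ x y : Fin n → ℝ,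
      (∀ i, 0 ≤ x i ∧ x i ≤ ux i) ∧ (∀ i, 0 ≤ y i ∧ y i ≤ uy i) ∧
      (∀ i : Fin n, ∀ h : (i : ℕ) + 1 < n, (i : ℕ) + 1 ≠ ny → x i ≤ x ⟨(i : ℕ) + 1, h⟩) ∧
      (∀ i j : Fin n, i < j →
        concEnv (D i j) f (x i, x j) + concEnv (R i j) f (y i, y j) ≥ γ)}
    ((1/4) * (1 + 1 / (((n - 1) / 4 : ℕ) : ℝ))) := by
  obtain ⟨m, hm, hmn, hmx, rfl, hnm⟩ :
      ∃ m, 1 ≤ m ∧ m < n ∧ m + 1 ≤ nx ∧ ny = m + 1 ∧ (n - 1) / 4 = m :=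
    ⟨(n - 1) / 4, by omega, by omega, by omega, by omega, rfl⟩
  rw [hnm]
  obtain rfl : f = sqDiff := funext hf
  obtain rfl : ux = fun i : Fin n => ubound nx i := funext hux
  obtain rfl : uy = fun i : Fin n => ubound (m + 1) i := funext huy
  refine ⟨⟨fun i => optimalX m i, fun i => optimalY m i, fun _ => optimalX_mem nx,
    fun _ => optimalY_mem, fun i _ h => optimalX_le_of_le (j := i + 1) i.val.le_succ (by omega),
    fun i j hij => ?_⟩, ?_⟩
  · rw [hD i j hij, hR i j hij]
    exact twcomb_value_le_optimal hm hmx hij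
  · rintro γ ⟨x, y, hx, hy, hmono, hpair⟩
    exact le_twcomb_value hm hmn hmx hD hR hx hy hmono hpair
end

section
/- Let n ≥ 3 be an integer. Consider the set of all (x, y, X, Y, γ) where x, y ∈ [0,1]^n, X_{ij}, Y_{ij} ∈ ℝ for 1 ≤ i ≤ j ≤ n, and γ ∈ ℝ, satisfying: (a) X_{ii} − 2X_{ij} + X_{jj} + Y_{ii} − 2Y_{ij} + Y_{jj} ≥ γ for all 1 ≤ i < j ≤ n; (b) X_{ii} ≤ x_i and Y_{ii} ≤ y_i for all i; (c) the clique inequalities: for every subset S ⊆ {1,…,n} with |S| = m ≥ 3 and every integer α with 1 ≤ α ≤ max{m−2, 1}, α·Σ_{i∈S} x_i − Σ_{i<j, i,j∈S} X_{ij} ≤ α(α+1)/2, and the same inequalities with (y, Y) in place of (x, X). Then the maximum value of γ over this set is attained and equals 1 + 1/n if n is odd, and 1 + 1/(n−1) if n is even. (This is the optimal value of the multi-row LP relaxation (MT^clique).) -/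
/-!
Let `k` be the largest odd number `≤ n`. Summing the pair constraints over all `i < j` and
using `X i i ≤ x i` bounds `γ * n(n-1)/2` by `(n-1) Σ x - 2 Σ_{i<j} X` plus the same in `(y, Y)`;
splitting `n - 1 = α + β` as evenly as possible, each of these is the sum of two clique
inequalities on the whole index set, which gives `γ ≤ 1 + 1/k`. Conversely, `x = 1/2`,
`X i i = 1/2` and `X i j = (k-1)/(4k)` for `i ≠ j` makes every pair constraint equal to
`1 + 1/k`, and on a set of size `m ≤ k + 1` its clique inequality for `α` becomes
`4kα(m-1-α) ≤ (k-1)m(m-1)`, which holds because `k` is odd.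
-/

open Finset

section PairSums

variable {ι R : Type*} [LinearOrder ι] [CommRing R]

theorem two_mul_sum_sum_ite_lt_of_symm (S : Finset ι) (g : ι → ι → R)
    (hg : ∀ i j, g i j = g j i) :
    2 * ∑ i ∈ S, ∑ j ∈ S, (if i < j then g i j else 0)
      = ∑ i ∈ S, ∑ j ∈ S, g i j - ∑ i ∈ S, g i i := by
  have hswap : ∑ i ∈ S, ∑ j ∈ S, (if j < i then g i j else 0)
      = ∑ i ∈ S, ∑ j ∈ S, (if i < j then g i j else 0) := by
    rw [sum_comm]
    simp_rw [hg]
  have hsplit : ∀ i j, g i j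
      = (if i < j then g i j else 0) + (if j < i then g i j else 0)
        + (if i = j then g i j else 0) := by
    intro i j
    rcases lt_trichotomy i j with h | rfl | h
    · simp [h, h.not_gt, h.ne]
    · simp
    · simp [h, h.not_gt, h.ne']
  have hdiag : ∑ i ∈ S, ∑ j ∈ S, (if i = j then g i j else 0) = ∑ i ∈ S, g i i :=
    sum_congr rfl fun i hi => by simp [hi]
  conv_rhs => rw [sum_congr rfl fun i _ => sum_congr rfl fun j _ => hsplit i j]
  simp only [sum_add_distrib, hswap, hdiag]
  ring

theorem sum_sum_ite_lt_const (S : Finset ι) (c : ℝ) :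
    ∑ i ∈ S, ∑ j ∈ S, (if i < j then c else 0) = c * (#S * (#S - 1)) / 2 := by
  have := two_mul_sum_sum_ite_lt_of_symm S (fun _ _ => c) fun _ _ => rfl
  simp only [sum_const, nsmul_eq_mul] at this
  linarith

theorem sum_sum_ite_lt_add (S : Finset ι) (f : ι → ℝ) :
    ∑ i ∈ S, ∑ j ∈ S, (if i < j then f i + f j else 0) = (#S - 1) * ∑ i ∈ S, f i := by
  have := two_mul_sum_sum_ite_lt_of_symm S (fun i j => f i + f j) fun _ _ => add_comm _ _
  simp only [sum_add_distrib, sum_const, nsmul_eq_mul, ← mul_sum] at this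
  linarith

end PairSums

theorem four_mul_mul_le_of_odd {k m α : ℤ} (hk : Odd k) (hmk : m ≤ k + 1) (hα : 1 ≤ α)
    (hαm : α + 2 ≤ m) : 4 * k * (α * (m - 1 - α)) ≤ (k - 1) * (m * (m - 1)) := by
  rcases hmk.lt_or_eq with h | rfl
  · nlinarith [sq_nonneg (m - 1 - 2 * α)]
  · have hne : k - 2 * α ≠ 0 := by
      obtain ⟨t, rfl⟩ := hk
      omega
    have hsq : 1 ≤ (k - 2 * α) ^ 2 := by nlinarith [Int.one_le_abs hne, sq_abs (k - 2 * α)]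
    nlinarith [mul_le_mul_of_nonneg_left hsq (by omega : (0 : ℤ) ≤ k)]

section MTClique

variable {ι : Type*} [LinearOrder ι]

def CliqueIneqs (x : ι → ℝ) (X : ι → ι → ℝ) : Prop :=
  ∀ S : Finset ι, 3 ≤ #S → ∀ α : ℕ, 1 ≤ α → α ≤ max (#S - 2) 1 →
    (α : ℝ) * (∑ i ∈ S, x i) - (∑ i ∈ S, ∑ j ∈ S, if i < j then X i j else 0)
      ≤ (α : ℝ) * ((α : ℝ) + 1) / 2

variable (ι) in
def mtCliqueValues : Set ℝ :=
  {γ | ∃ (x y : ι → ℝ) (X Y : ι → ι → ℝ),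
    (∀ i, 0 ≤ x i ∧ x i ≤ 1) ∧ (∀ i, 0 ≤ y i ∧ y i ≤ 1) ∧
    (∀ i j, i < j → X i i - 2 * X i j + X j j + Y i i - 2 * Y i j + Y j j ≥ γ) ∧
    (∀ i, X i i ≤ x i ∧ Y i i ≤ y i) ∧ CliqueIneqs x X ∧ CliqueIneqs y Y}

theorem cliqueIneqs_half_of_odd [Fintype ι] {k : ℕ} (hk : Odd k)
    (hcard : Fintype.card ι ≤ k + 1) :
    CliqueIneqs (fun _ => 1 / 2)
      (fun i j : ι => if i = j then 1 / 2 else ((k : ℝ) - 1) / (4 * k)) := by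
  intro S hS α hα hαS
  set c : ℝ := ((k : ℝ) - 1) / (4 * k)
  have hαS' : α + 2 ≤ #S := by omega
  have hpairs : ∑ i ∈ S, ∑ j ∈ S, (if i < j then (if i = j then 1 / 2 else c) else 0)
      = c * (#S * (#S - 1)) / 2 := by
    rw [← sum_sum_ite_lt_const]
    refine sum_congr rfl fun i _ => sum_congr rfl fun j _ => ?_
    split_ifs with h h'
    exacts [absurd h' h.ne, rfl, rfl]
  have hkey : (α : ℝ) * (#S - 1 - α) ≤ c * (#S * (#S - 1)) := by
    have hk0 : (0 : ℝ) < k := by exact_mod_cast hk.pos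
    have := four_mul_mul_le_of_odd (k := k) (m := #S) (α := α) hk.natCast
      (by exact_mod_cast (card_le_univ S).trans hcard) (by exact_mod_cast hα)
      (by exact_mod_cast hαS')
    have hR : 4 * (k : ℝ) * (α * (#S - 1 - α)) ≤ (k - 1) * (#S * (#S - 1)) := by
      exact_mod_cast this
    rw [div_mul_eq_mul_div, le_div_iff₀ (by positivity)]
    linarith
  simp only [hpairs, sum_const, nsmul_eq_mul]
  linarith

theorem CliqueIneqs.sum_sum_ite_lt_le [Fintype ι] {x : ι → ℝ} {X : ι → ι → ℝ}
    (hX : CliqueIneqs x X) (hdiag : ∀ i, X i i ≤ x i) {α β : ℕ} (hα : 1 ≤ α) (hβ : 1 ≤ β)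
    (hcard : α + β + 1 = Fintype.card ι) :
    ∑ i, ∑ j, (if i < j then X i i - 2 * X i j + X j j else 0)
      ≤ α * (α + 1) / 2 + β * (β + 1) / 2 := by
  have hsplit : ∑ i, ∑ j, (if i < j then X i i - 2 * X i j + X j j else 0)
      = ∑ i, ∑ j, (if i < j then X i i + X j j else 0)
        - 2 * ∑ i, ∑ j, (if i < j then X i j else 0) := by
    simp only [mul_sum, ← sum_sub_distrib]
    refine sum_congr rfl fun i _ => sum_congr rfl fun j _ => ?_
    split_ifs <;> ring
  have hcard' : #(univ : Finset ι) = α + β + 1 := by rw [card_univ, hcard]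
  have hxα := hX univ (by omega) α hα (by omega)
  have hxβ := hX univ (by omega) β hβ (by omega)
  have hdiag' : (α + β : ℝ) * ∑ i, X i i ≤ (α + β) * ∑ i, x i :=
    mul_le_mul_of_nonneg_left (sum_le_sum fun i _ => hdiag i) (by positivity)
  rw [hsplit, sum_sum_ite_lt_add, hcard']
  push_cast
  linarith

theorem mul_le_of_mem_mtCliqueValues [Fintype ι] {γ : ℝ} (hγ : γ ∈ mtCliqueValues ι)
    {α β : ℕ} (hα : 1 ≤ α) (hβ : 1 ≤ β) (hcard : α + β + 1 = Fintype.card ι) :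
    γ * (Fintype.card ι * (Fintype.card ι - 1)) ≤ 2 * (α * (α + 1) + β * (β + 1)) := by
  obtain ⟨x, y, X, Y, -, -, hpair, hdiag, hX, hY⟩ := hγ
  have hsum : γ * (Fintype.card ι * (Fintype.card ι - 1)) / 2
      ≤ ∑ i, ∑ j, (if i < j then X i i - 2 * X i j + X j j else 0)
        + ∑ i, ∑ j, (if i < j then Y i i - 2 * Y i j + Y j j else 0) := by
    rw [← card_univ, ← sum_sum_ite_lt_const, ← sum_add_distrib]
    refine sum_le_sum fun i _ => ?_
    rw [← sum_add_distrib]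
    refine sum_le_sum fun j _ => ?_
    split_ifs with h
    · linarith [hpair i j h]
    · simp
  linarith [hX.sum_sum_ite_lt_le (fun i => (hdiag i).1) hα hβ hcard,
    hY.sum_sum_ite_lt_le (fun i => (hdiag i).2) hα hβ hcard]

theorem isGreatest_mtCliqueValues [Fintype ι] {k : ℕ} (hk : Odd k) (hk3 : 3 ≤ k)
    (hkn : k ≤ Fintype.card ι) (hnk : Fintype.card ι ≤ k + 1) :
    IsGreatest (mtCliqueValues ι) (1 + 1 / k) := by
  have hk0 : (0 : ℝ) < k := by exact_mod_cast hk.pos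
  refine ⟨⟨_, _, _, _, fun _ => by norm_num, fun _ => by norm_num, fun i j hij => ?_,
    fun _ => by simp, cliqueIneqs_half_of_odd hk hnk, cliqueIneqs_half_of_odd hk hnk⟩, ?_⟩
  · simp only [↓reduceIte, if_neg hij.ne]
    refine le_of_eq ?_
    field_simp
    ring
  · intro γ hγ
    obtain ⟨a, rfl⟩ := hk
    rw [one_add_div hk0.ne', le_div_iff₀ hk0]
    push_cast
    have ha : (1 : ℝ) ≤ a := by exact_mod_cast (by omega : 1 ≤ a)
    rcases (show Fintype.card ι = 2 * a + 1 ∨ Fintype.card ι = 2 * a + 2 by omega) with h | h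
    · have := mul_le_of_mem_mtCliqueValues hγ (α := a) (β := a) (by omega) (by omega)
        (by omega)
      rw [h] at this
      push_cast at this
      nlinarith
    · have := mul_le_of_mem_mtCliqueValues hγ (α := a) (β := a + 1) (by omega) (by omega)
        (by omega)
      rw [h] at this
      push_cast at this
      nlinarith

end MTClique

/-- The optimal value of the multi-row LP relaxation (MT^clique) of the circle packing
problem is `1 + 1/n` for odd `n` and `1 + 1/(n-1)` for even `n`, for all `n ≥ 3`. -/
theorem stmt_4 (n : ℕ) (hn : 3 ≤ n) :
    IsGreatest {γ : ℝ | ∃ (x y : Fin n → ℝ) (X Y : Fin n → Fin n → ℝ),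
      (∀ i, 0 ≤ x i ∧ x i ≤ 1) ∧ (∀ i, 0 ≤ y i ∧ y i ≤ 1) ∧
      (∀ i j : Fin n, i < j →
        X i i - 2 * X i j + X j j + Y i i - 2 * Y i j + Y j j ≥ γ) ∧
      (∀ i, X i i ≤ x i ∧ Y i i ≤ y i) ∧
      (∀ S : Finset (Fin n), 3 ≤ S.card → ∀ α : ℕ, 1 ≤ α → α ≤ max (S.card - 2) 1 →
        (α : ℝ) * (∑ i ∈ S, x i) - (∑ i ∈ S, ∑ j ∈ S, if i < j then X i j else 0)
          ≤ (α : ℝ) * ((α : ℝ) + 1) / 2) ∧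
      (∀ S : Finset (Fin n), 3 ≤ S.card → ∀ α : ℕ, 1 ≤ α → α ≤ max (S.card - 2) 1 →
        (α : ℝ) * (∑ i ∈ S, y i) - (∑ i ∈ S, ∑ j ∈ S, if i < j then Y i j else 0)
          ≤ (α : ℝ) * ((α : ℝ) + 1) / 2)}
    (if Odd n then 1 + 1 / (n : ℝ) else 1 + 1 / ((n : ℝ) - 1)) := by
  change IsGreatest (mtCliqueValues (Fin n)) _
  rcases Nat.even_or_odd n with hev | hodd
  · rw [if_neg (Nat.not_odd_iff_even.2 hev)]
    have hn4 : 4 ≤ n := by obtain ⟨t, rfl⟩ := hev; omega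
    have h := isGreatest_mtCliqueValues (ι := Fin n) (Nat.Even.sub_odd (by omega) hev odd_one)
      (by omega) (by rw [Fintype.card_fin]; omega) (by rw [Fintype.card_fin]; omega)
    rwa [Nat.cast_sub (by omega), Nat.cast_one] at h
  · rw [if_pos hodd]
    exact isGreatest_mtCliqueValues hodd hn (by simp) (by simp)
end

section
/- Let n ≥ 3 be an integer. Consider the set of all (x, y, Y, γ) with 0 ≤ x_1 ≤ x_2 ≤ … ≤ x_n ≤ 1, y ∈ [0,1]^n, Y_{ij} ∈ ℝ for 1 ≤ i ≤ j ≤ n, and γ ∈ ℝ, satisfying: (a) x_j − x_i + Y_{ii} − 2Y_{ij} + Y_{jj} ≥ γ for all 1 ≤ i < j ≤ n; (b) y_i + y_j + y_k − Y_{ij} − Y_{jk} − Y_{ik} ≤ 1 for all 1 ≤ i < j < k ≤ n; (c) Y_{ii} ≤ y_i for all i ∈ {1,…,n}. Then the maximum value of γ over this set is attained and equals (2/3)(1 + 1/⌊(n−1)/2⌋). (This is the optimal value of the LP relaxation (MTord^tri).) -/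
/-!
Summing the three pair constraints (a) of a triple `i < j < k` and bounding the diagonal terms
by (b) and (c) gives `3γ ≤ 2 + 2 (x_k - x_i)`. Chaining the triples `(2t, 2t+1, 2t+2)` for
`t < m := ⌊(n-1)/2⌋` and telescoping yields `3mγ ≤ 2m + 2 (x_{2m} - x_0) ≤ 2m + 2`.

The bound is attained by grouping the indices into blocks `{2t, 2t+1}`: put `x_i = ⌊i/2⌋/m`,
`y = 1`, `Y_ii = 1`, `Y_ij = 2/3 - 1/(3m)` inside a block and `2/3 + 1/(6m)` across blocks.
-/

namespace MTordTri

theorem three_mul_le_of_triple {ι : Type*} (x y : ι → ℝ) (Y : ι → ι → ℝ) (γ : ℝ) {i j k : ι}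
    (hij : x j - x i + Y i i - 2 * Y i j + Y j j ≥ γ)
    (hik : x k - x i + Y i i - 2 * Y i k + Y k k ≥ γ)
    (hjk : x k - x j + Y j j - 2 * Y j k + Y k k ≥ γ)
    (htri : y i + y j + y k - Y i j - Y j k - Y i k ≤ 1)
    (hi : Y i i ≤ y i) (hj : Y j j ≤ y j) (hk : Y k k ≤ y k) :
    3 * γ ≤ 2 + 2 * (x k - x i) := by
  linarith

theorem nat_mul_le_sub_of_le_sub {n d : ℕ} (x : Fin n → ℝ) (c : ℝ)
    (hstep : ∀ i k : Fin n, (i : ℕ) + d = k → c ≤ x k - x i) (h0 : 0 < n) :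
    ∀ (t : ℕ) (ht : d * t < n), t * c ≤ x ⟨d * t, ht⟩ - x ⟨0, h0⟩
  | 0, _ => by simp
  | t + 1, ht => by
    have ih := nat_mul_le_sub_of_le_sub x c hstep h0 t (by nlinarith)
    have step := hstep ⟨d * t, by nlinarith⟩ ⟨d * (t + 1), ht⟩ (by simp [mul_add])
    push_cast
    linarith

theorem gamma_le_of_feasible {n : ℕ} (x y : Fin n → ℝ) (Y : Fin n → Fin n → ℝ) (γ : ℝ)
    (hx : ∀ i, 0 ≤ x i ∧ x i ≤ 1)
    (hpair : ∀ i j : Fin n, i < j → x j - x i + Y i i - 2 * Y i j + Y j j ≥ γ)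
    (htri : ∀ i j k : Fin n, i < j → j < k → y i + y j + y k - Y i j - Y j k - Y i k ≤ 1)
    (hdiag : ∀ i, Y i i ≤ y i) {m : ℕ} (hm : 0 < m) (hmn : 2 * m < n) :
    γ ≤ (2 / 3) * (1 + 1 / (m : ℝ)) := by
  have hstep : ∀ i k : Fin n, (i : ℕ) + 2 = k → (3 * γ - 2) / 2 ≤ x k - x i := by
    intro i k hik
    have hij : i < ⟨i + 1, by omega⟩ := Fin.mk_lt_mk.mpr (by omega)
    have hjk : (⟨i + 1, by omega⟩ : Fin n) < k := Fin.mk_lt_mk.mpr (by omega)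
    have := three_mul_le_of_triple x y Y γ (hpair _ _ hij) (hpair _ _ (hij.trans hjk))
      (hpair _ _ hjk) (htri _ _ _ hij hjk) (hdiag _) (hdiag _) (hdiag _)
    linarith
  have hchain := nat_mul_le_sub_of_le_sub x _ hstep (by omega) m hmn
  have hbound : (m : ℝ) * ((3 * γ - 2) / 2) ≤ 1 := by
    linarith [(hx ⟨2 * m, hmn⟩).2, (hx ⟨0, by omega⟩).1]
  have hmpos : (0 : ℝ) < m := by exact_mod_cast hm
  calc γ = 2 / 3 * (1 + m * ((3 * γ - 2) / 2) / m) := by field_simp; ring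
    _ ≤ 2 / 3 * (1 + 1 / m) := by gcongr

noncomputable def witnessX (m i : ℕ) : ℝ := ((i / 2 : ℕ) : ℝ) / m

noncomputable def witnessY (m i j : ℕ) : ℝ :=
  if i = j then 1 else if i / 2 = j / 2 then 2 / 3 - (m : ℝ)⁻¹ / 3 else 2 / 3 + (m : ℝ)⁻¹ / 6

theorem witnessX_nonneg (m i : ℕ) : 0 ≤ witnessX m i := by
  unfold witnessX; positivity

theorem witnessX_le_one {m i : ℕ} (hm : 0 < m) (hi : i / 2 ≤ m) : witnessX m i ≤ 1 := by
  unfold witnessX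
  rw [div_le_one (by exact_mod_cast hm)]
  exact_mod_cast hi

theorem witnessX_monotone (m : ℕ) : Monotone (witnessX m) := by
  intro i j hij
  unfold witnessX
  gcongr

theorem witness_pair {m i j : ℕ} (hij : i < j) :
    witnessX m j - witnessX m i + witnessY m i i - 2 * witnessY m i j + witnessY m j j ≥
      (2 / 3) * (1 + 1 / (m : ℝ)) := by
  simp only [witnessY, if_true, hij.ne, if_false, one_div]
  by_cases hblock : i / 2 = j / 2
  · simp only [witnessX, hblock, if_true]
    linarith
  · have hgap : ((i / 2 : ℕ) : ℝ) + 1 ≤ ((j / 2 : ℕ) : ℝ) := by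
      exact_mod_cast lt_of_le_of_ne (Nat.div_le_div_right hij.le) hblock
    have : (m : ℝ)⁻¹ ≤ witnessX m j - witnessX m i := by
      rw [witnessX, witnessX, div_sub_div_same, ← one_div]
      gcongr
      linarith
    simp only [hblock, if_false]
    linarith

theorem witness_triangle (m : ℕ) {i j k : ℕ} (hij : i < j) (hjk : j < k) :
    1 + 1 + 1 - witnessY m i j - witnessY m j k - witnessY m i k ≤ 1 := by
  have hik : i / 2 ≠ k / 2 := by omega
  have hinv : (0 : ℝ) ≤ (m : ℝ)⁻¹ := by positivity
  simp only [witnessY, hij.ne, hjk.ne, (hij.trans hjk).ne, hik, if_false]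
  split_ifs <;> first | omega | linarith

end MTordTri

open MTordTri in
/-- The optimal value of the multi-row LP relaxation (MTord^tri) of the circle packing
problem is `(2/3)(1 + 1/⌊(n-1)/2⌋)` for all `n ≥ 3`. -/
theorem stmt_6 (n : ℕ) (hn : 3 ≤ n) :
    IsGreatest {γ : ℝ | ∃ (x y : Fin n → ℝ) (Y : Fin n → Fin n → ℝ),
      (∀ i, 0 ≤ x i ∧ x i ≤ 1) ∧ Monotone x ∧
      (∀ i, 0 ≤ y i ∧ y i ≤ 1) ∧
      (∀ i j : Fin n, i < j → x j - x i + Y i i - 2 * Y i j + Y j j ≥ γ) ∧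
      (∀ i j k : Fin n, i < j → j < k →
        y i + y j + y k - Y i j - Y j k - Y i k ≤ 1) ∧
      (∀ i, Y i i ≤ y i)}
    ((2/3) * (1 + 1 / (((n - 1) / 2 : ℕ) : ℝ))) := by
  have hm : 0 < (n - 1) / 2 := by omega
  refine ⟨⟨fun i => witnessX ((n - 1) / 2) i, fun _ => 1, fun i j => witnessY ((n - 1) / 2) i j,
    fun i => ⟨witnessX_nonneg _ _, witnessX_le_one hm (by omega)⟩,
    fun i j hij => witnessX_monotone _ hij, fun _ => ⟨zero_le_one, le_rfl⟩,
    fun i j hij => witness_pair hij, fun i j k hij hjk => witness_triangle _ hij hjk,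
    fun i => by simp [witnessY]⟩, ?_⟩
  rintro γ ⟨x, y, Y, hx, -, -, hpair, htri, hdiag⟩
  exact gamma_le_of_feasible x y Y γ hx hpair htri hdiag hm (by omega)
end

section
/- Let n ≥ 2 be an integer. Consider the set of all (x, y, X, Y, γ) where x, y ∈ [0,1]^n, X and Y are real symmetric n×n matrices with X − x xᵀ positive semidefinite and Y − y yᵀ positive semidefinite, γ ∈ ℝ, and: X_{ii} − 2X_{ij} + X_{jj} + Y_{ii} − 2Y_{ij} + Y_{jj} ≥ γ for all 1 ≤ i < j ≤ n, and X_{ii} ≤ x_i, Y_{ii} ≤ y_i for all i ∈ {1,…,n}. Then the maximum value of γ over this set is attained and equals 1 + 1/(n−1). (This is the optimal value of the SDP relaxation (SDP1) of the circle packing problem.) -/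
/-!
Summing the constraints over all ordered pairs `i ≠ j` gives
`n (n - 1) γ ≤ ∑ᵢⱼ (X_ii - 2 X_ij + X_jj) + (the same for Y)`, and each double sum equals
`2 n tr X - 2 ⟪1, X 1⟫`. With `s = ∑ᵢ xᵢ`, the diagonal bound gives `tr X ≤ s` and `X ⪰ x xᵀ` gives
`⟪1, X 1⟫ ≥ s²`, so the double sum is at most `2 n s - 2 s² ≤ n² / 2`. Hence `γ ≤ n / (n - 1)`.
-/

open Finset Matrix

namespace Matrix

variable {ι : Type*}

/-- For the Gram matrix `A i j = ⟪p i, p j⟫` of points `p`, this is `‖p i - p j‖ ^ 2`. -/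
def gramSqDist (A : Matrix ι ι ℝ) (i j : ι) : ℝ := A i i - 2 * A i j + A j j

@[simp]
theorem gramSqDist_self (A : Matrix ι ι ℝ) (i : ι) : A.gramSqDist i i = 0 := by
  unfold gramSqDist; ring

theorem IsSymm.gramSqDist_comm {A : Matrix ι ι ℝ} (hA : A.IsSymm) (i j : ι) :
    A.gramSqDist i j = A.gramSqDist j i := by
  unfold gramSqDist; rw [hA.apply i j]; ring

theorem sum_sum_gramSqDist [Fintype ι] (A : Matrix ι ι ℝ) :
    ∑ i, ∑ j, A.gramSqDist i j = 2 * Fintype.card ι * A.trace - 2 * ∑ i, ∑ j, A i j := by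
  simp only [gramSqDist, sum_add_distrib, sum_sub_distrib, sum_const, card_univ, nsmul_eq_mul,
    ← mul_sum, trace, diag_apply]
  ring

theorem PosSemidef.sq_sum_le_sum_sum_of_sub_vecMulVec [Fintype ι] {A : Matrix ι ι ℝ} {z : ι → ℝ}
    (h : (A - vecMulVec z z).PosSemidef) : (∑ i, z i) ^ 2 ≤ ∑ i, ∑ j, A i j := by
  have := h.dotProduct_mulVec_nonneg (fun _ => 1)
  simp only [dotProduct, mulVec, sub_apply, vecMulVec_apply, star_trivial, mul_one, one_mul,
    sum_sub_distrib] at this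
  rw [sq, sum_mul_sum]
  linarith

theorem sum_sum_gramSqDist_le [Fintype ι] {A : Matrix ι ι ℝ} {z : ι → ℝ}
    (hpsd : (A - vecMulVec z z).PosSemidef) (hdiag : ∀ i, A i i ≤ z i) :
    ∑ i, ∑ j, A.gramSqDist i j ≤ (Fintype.card ι : ℝ) ^ 2 / 2 := by
  have htrace : A.trace ≤ ∑ i, z i := sum_le_sum fun i _ => hdiag i
  have hsum := hpsd.sq_sum_le_sum_sum_of_sub_vecMulVec
  have hcard : (0 : ℝ) ≤ Fintype.card ι := Nat.cast_nonneg _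
  rw [sum_sum_gramSqDist]
  nlinarith [sq_nonneg ((Fintype.card ι : ℝ) - 2 * ∑ i, z i)]

end Matrix

theorem card_mul_card_sub_one_mul_le_sum_sum {ι : Type*} [Fintype ι] [DecidableEq ι]
    {f : ι → ι → ℝ} {γ : ℝ} (hdiag : ∀ i, f i i = 0) (hoff : ∀ i j, i ≠ j → γ ≤ f i j) :
    (Fintype.card ι * (Fintype.card ι - 1) : ℝ) * γ ≤ ∑ i, ∑ j, f i j := by
  have hrow : ∀ i, (Fintype.card ι - 1 : ℝ) * γ ≤ ∑ j, f i j := by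
    intro i
    rw [← sum_erase _ (hdiag i), ← card_univ, ← cast_card_erase_of_mem (mem_univ i),
      ← nsmul_eq_mul]
    exact card_nsmul_le_sum _ _ _ fun j hj => hoff i j (ne_of_mem_erase hj).symm
  calc (Fintype.card ι * (Fintype.card ι - 1) : ℝ) * γ
      = ∑ _i : ι, (Fintype.card ι - 1 : ℝ) * γ := by
        rw [sum_const, card_univ, nsmul_eq_mul, mul_assoc]
    _ ≤ ∑ i, ∑ j, f i j := sum_le_sum fun i _ => hrow i

namespace SimpleGraph

theorem lapMatrix_top_apply {V : Type*} [Fintype V] [DecidableEq V] (i j : V) :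
    (⊤ : SimpleGraph V).lapMatrix ℝ i j = if i = j then (Fintype.card V - 1 : ℝ) else -1 := by
  have : 1 ≤ Fintype.card V := Fintype.card_pos_iff.mpr ⟨i⟩
  by_cases h : i = j <;> simp [lapMatrix, degMatrix, h, this]

end SimpleGraph

section Witness

variable (ι : Type*) [Fintype ι] [DecidableEq ι]

/-- Equality in `Matrix.sum_sum_gramSqDist_le` forces `A i i = z i`, `∑ z = n / 2` and
`(A - vecMulVec z z) *ᵥ 1 = 0`; a multiple of the Laplacian of the complete graph provides this. -/
noncomputable def sdpWitness : Matrix ι ι ℝ :=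
  vecMulVec (fun _ => 1 / 2) (fun _ => 1 / 2) +
    (4 * (Fintype.card ι - 1 : ℝ))⁻¹ • (⊤ : SimpleGraph ι).lapMatrix ℝ

variable {ι}

theorem sdpWitness_apply (hι : 1 < Fintype.card ι) (i j : ι) :
    sdpWitness ι i j = if i = j then 1 / 2 else 1 / 4 - (4 * (Fintype.card ι - 1 : ℝ))⁻¹ := by
  have : (Fintype.card ι - 1 : ℝ) ≠ 0 := sub_ne_zero.mpr (by exact_mod_cast hι.ne')
  by_cases h : i = j
  · simp [sdpWitness, vecMulVec_apply, SimpleGraph.lapMatrix_top_apply, h]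
    field_simp
    ring
  · simp [sdpWitness, vecMulVec_apply, SimpleGraph.lapMatrix_top_apply, h]
    ring

theorem isSymm_sdpWitness : (sdpWitness ι).IsSymm :=
  IsSymm.add (transpose_vecMulVec _ _) ((SimpleGraph.isSymm_lapMatrix _ _).smul _)

theorem posSemidef_sdpWitness_sub (hι : 1 < Fintype.card ι) :
    (sdpWitness ι - vecMulVec (fun _ => 1 / 2) (fun _ => 1 / 2)).PosSemidef := by
  rw [sdpWitness, add_sub_cancel_left]
  refine (SimpleGraph.posSemidef_lapMatrix ℝ _).smul (inv_nonneg.mpr ?_)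
  have : (1 : ℝ) < Fintype.card ι := by exact_mod_cast hι
  linarith

theorem gramSqDist_sdpWitness (hι : 1 < Fintype.card ι) {i j : ι} (hij : i ≠ j) :
    (sdpWitness ι).gramSqDist i j = 1 / 2 * (1 + 1 / (Fintype.card ι - 1 : ℝ)) := by
  have : (Fintype.card ι - 1 : ℝ) ≠ 0 := sub_ne_zero.mpr (by exact_mod_cast hι.ne')
  simp only [gramSqDist, sdpWitness_apply hι, hij, if_true, if_false]
  field_simp
  ring

end Witness

/-- The optimal value of the basic SDP relaxation (SDP1) of the circle packing
problem is `1 + 1/(n-1)` for all `n ≥ 2`. -/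
theorem stmt_8 (n : ℕ) (hn : 2 ≤ n) :
    IsGreatest {γ : ℝ | ∃ (x y : Fin n → ℝ) (X Y : Matrix (Fin n) (Fin n) ℝ),
      (∀ i, 0 ≤ x i ∧ x i ≤ 1) ∧ (∀ i, 0 ≤ y i ∧ y i ≤ 1) ∧
      X.IsSymm ∧ Y.IsSymm ∧
      (X - Matrix.vecMulVec x x).PosSemidef ∧
      (Y - Matrix.vecMulVec y y).PosSemidef ∧
      (∀ i j : Fin n, i < j →
        X i i - 2 * X i j + X j j + Y i i - 2 * Y i j + Y j j ≥ γ) ∧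
      (∀ i, X i i ≤ x i ∧ Y i i ≤ y i)}
    (1 + 1 / ((n : ℝ) - 1)) := by
  have hcard : 1 < Fintype.card (Fin n) := by rw [Fintype.card_fin]; omega
  have hn' : (1 : ℝ) < n := by exact_mod_cast hcard.trans_eq (Fintype.card_fin n)
  constructor
  · have hX := isSymm_sdpWitness (ι := Fin n)
    have hXpsd := posSemidef_sdpWitness_sub hcard
    have hdiag i : sdpWitness (Fin n) i i ≤ 1 / 2 := by simp [sdpWitness_apply hcard]
    refine ⟨_, _, _, _, fun _ => by norm_num, fun _ => by norm_num, hX, hX, hXpsd, hXpsd,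
      fun i j hij => ?_, fun i => ⟨hdiag i, hdiag i⟩⟩
    have := gramSqDist_sdpWitness hcard hij.ne
    simp only [gramSqDist, Fintype.card_fin] at this
    linarith
  · rintro γ ⟨x, y, X, Y, -, -, hXs, hYs, hXpsd, hYpsd, hpair, hdiag⟩
    have hoff i j (hij : i ≠ j) : γ ≤ X.gramSqDist i j + Y.gramSqDist i j := by
      rcases hij.lt_or_gt with h | h
      · unfold gramSqDist; linarith [hpair i j h]
      · rw [hXs.gramSqDist_comm, hYs.gramSqDist_comm]; unfold gramSqDist; linarith [hpair j i h]
    have hlower := card_mul_card_sub_one_mul_le_sum_sum (by simp) hoff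
    have hX := sum_sum_gramSqDist_le hXpsd fun i => (hdiag i).1
    have hY := sum_sum_gramSqDist_le hYpsd fun i => (hdiag i).2
    simp only [sum_add_distrib, Fintype.card_fin] at hlower hX hY
    have hγ : ((n : ℝ) - 1) * γ ≤ n :=
      le_of_mul_le_mul_left (by linarith) (by positivity : (0 : ℝ) < n)
    calc γ ≤ n / ((n : ℝ) - 1) := by rw [le_div_iff₀ (by linarith)]; linarith
      _ = 1 + 1 / ((n : ℝ) - 1) := by field_simp [sub_ne_zero.mpr hn'.ne']; ring
end

section
/- The convex hull of the set {(a, b, t) ∈ ℝ³ : (b − a)^2 ≥ t, 0 ≤ a ≤ b ≤ 1} equals {(a, b, t) ∈ ℝ³ : b − a ≥ t, 0 ≤ a ≤ b ≤ 1}. Equivalently, the concave envelope of the function (a, b) ↦ (b − a)^2 over the triangle {(a,b): 0 ≤ a ≤ b ≤ 1} is the function (a, b) ↦ b − a. -/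
/-!
Since `0 ≤ b - a ≤ 1`, we have `(b - a)² ≤ b - a`, and the right-hand side is cut out by linear
inequalities, so it is a convex superset. Conversely, a point `(a, b, t)` with `(b - a)² < t ≤ b - a`
has `d = b - a ∈ (0, 1)` and is the convex combination `(1 - d) • (x, x, t₀) + d • (0, 1, 1)` with
`x = a / (1 - d)` and `t₀ = (t - d) / (1 - d) ≤ 0`; both endpoints lie in the smaller set.
-/

open Set

def triangleHypograph (f : ℝ → ℝ → ℝ) : Set (ℝ × ℝ × ℝ) :=
  {p | f p.1 p.2.1 ≥ p.2.2 ∧ 0 ≤ p.1 ∧ p.1 ≤ p.2.1 ∧ p.2.1 ≤ 1}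

lemma triangleHypograph_mono {f g : ℝ → ℝ → ℝ}
    (hfg : ∀ a b, 0 ≤ a → a ≤ b → b ≤ 1 → f a b ≤ g a b) :
    triangleHypograph f ⊆ triangleHypograph g :=
  fun _ ⟨ht, h0a, hab, hb1⟩ => ⟨(hfg _ _ h0a hab hb1).trans' ht, h0a, hab, hb1⟩

lemma convex_triangleHypograph_sub : Convex ℝ (triangleHypograph fun a b => b - a) := by
  rintro ⟨a₁, b₁, t₁⟩ ⟨ht₁, h0a₁, hab₁, hb₁⟩ ⟨a₂, b₂, t₂⟩ ⟨ht₂, h0a₂, hab₂, hb₂⟩ u v hu hv huv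
  simp only [triangleHypograph, mem_ofPred_eq, Prod.smul_mk, Prod.mk_add_mk, smul_eq_mul] at *
  refine ⟨?_, ?_, ?_, ?_⟩ <;> nlinarith

lemma sq_sub_le_sub {a b : ℝ} (h0a : 0 ≤ a) (hab : a ≤ b) (hb1 : b ≤ 1) : (b - a) ^ 2 ≤ b - a :=
  pow_le_of_le_one (sub_nonneg.2 hab) (by linarith) two_ne_zero

lemma triangleHypograph_sq_subset :
    triangleHypograph (fun a b => (b - a) ^ 2) ⊆ triangleHypograph fun a b => b - a :=
  triangleHypograph_mono fun _ _ h0a hab hb1 => sq_sub_le_sub h0a hab hb1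

lemma diag_corner_combination_eq {a b t : ℝ} (hne : 1 - (b - a) ≠ 0) :
    (1 - (b - a)) • ((a / (1 - (b - a)), a / (1 - (b - a)), (t - (b - a)) / (1 - (b - a))) :
        ℝ × ℝ × ℝ) + (b - a) • ((0, 1, 1) : ℝ × ℝ × ℝ) = (a, b, t) := by
  simp only [Prod.smul_mk, Prod.mk_add_mk, smul_eq_mul, Prod.mk.injEq]
  refine ⟨?_, ?_, ?_⟩ <;> field_simp <;> ring

lemma triangleHypograph_sub_subset_convexHull :
    triangleHypograph (fun a b => b - a) ⊆
      convexHull ℝ (triangleHypograph fun a b => (b - a) ^ 2) := by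
  set S := triangleHypograph fun a b => (b - a) ^ 2
  rintro ⟨a, b, t⟩ ⟨ht, h0a, hab, hb1⟩
  dsimp only at ht h0a hab hb1
  rcases le_or_gt t ((b - a) ^ 2) with htd | htd
  · exact subset_convexHull ℝ S ⟨htd, h0a, hab, hb1⟩
  have hd0 : 0 < b - a := by nlinarith
  have hd1 : 0 < 1 - (b - a) := by nlinarith
  have hdiag : (a / (1 - (b - a)), a / (1 - (b - a)), (t - (b - a)) / (1 - (b - a))) ∈ S := by
    refine ⟨?_, div_nonneg h0a hd1.le, le_rfl, (div_le_one hd1).2 (by linarith)⟩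
    simpa using div_nonpos_of_nonpos_of_nonneg (by linarith : t - (b - a) ≤ 0) hd1.le
  have hcorner : ((0, 1, 1) : ℝ × ℝ × ℝ) ∈ S := by norm_num [S, triangleHypograph]
  rw [← diag_corner_combination_eq (t := t) hd1.ne']
  exact convex_convexHull ℝ S (subset_convexHull ℝ S hdiag) (subset_convexHull ℝ S hcorner)
    hd1.le hd0.le (by ring)

/-- The convex hull of `{(a, b, t) : (b - a)² ≥ t, 0 ≤ a ≤ b ≤ 1}` is
`{(a, b, t) : b - a ≥ t, 0 ≤ a ≤ b ≤ 1}`; equivalently, the concave envelope of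
`(a, b) ↦ (b - a)²` over the triangle `0 ≤ a ≤ b ≤ 1` is `(a, b) ↦ b - a`. -/
theorem stmt_13 :
    convexHull ℝ
      {p : ℝ × ℝ × ℝ | (p.2.1 - p.1)^2 ≥ p.2.2 ∧ 0 ≤ p.1 ∧ p.1 ≤ p.2.1 ∧ p.2.1 ≤ 1} =
    {p : ℝ × ℝ × ℝ | p.2.1 - p.1 ≥ p.2.2 ∧ 0 ≤ p.1 ∧ p.1 ≤ p.2.1 ∧ p.2.1 ≤ 1} :=
  Subset.antisymm (convexHull_min triangleHypograph_sq_subset convex_triangleHypograph_sub)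
    triangleHypograph_sub_subset_convexHull
end

section
/- The convex hull of the set {(a, b, c, d, γ) ∈ ℝ⁵ : (b − a)² + (d − c)² ≥ γ, a, b, c, d ∈ [0, 1]} equals the set {(a, b, c, d, γ) ∈ ℝ⁵ : a + b + c + d ≥ γ, −a − b + c + d + 2 ≥ γ, a + b − c − d + 2 ≥ γ, −a − b − c − d + 4 ≥ γ, a, b, c, d ∈ [0, 1]}. -/
/-!
The four linear inequalities say `γ ≤ φ(a, b) + φ(c, d)` with `φ(a, b) = min (a + b) (2 - a - b)`,
a concave function that dominates `(b - a)²` on the unit square and agrees with it at the corners.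
So the polyhedron is convex and contains the non-convex set. Conversely, triangulating the square
along `a + b = 1` writes `(a, b, φ(a, b))` as a convex combination of points `(v₁, v₂, (v₂ - v₁)²)`
at corners `v`; doing this first in `(a, b)` and then in `(c, d)` puts every point of the
polyhedron in the convex hull.
-/

open Set

section

variable {E : Type*} [AddCommGroup E] [Module ℝ E] {K : Set E}

theorem Convex.smul_add_smul_add_smul_mem (hK : Convex ℝ K) {x y z : E}
    (hx : x ∈ K) (hy : y ∈ K) (hz : z ∈ K) {r s t : ℝ} (hr : 0 ≤ r) (hs : 0 ≤ s) (ht : 0 ≤ t)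
    (hrst : r + s + t = 1) : r • x + s • y + t • z ∈ K := by
  have := hK.sum_mem (t := Finset.univ) (w := ![r, s, t]) (z := ![x, y, z])
    (by intro i _; fin_cases i <;> assumption) (by simp [Fin.sum_univ_three, hrst])
    (by intro i _; fin_cases i <;> assumption)
  simpa [Fin.sum_univ_three] using this

theorem Convex.add_smul_add_smul_add_min_smul_mem (hK : Convex ℝ K) {o u v w : E}
    (h₀₀ : o ∈ K) (h₁₀ : o + u + w ∈ K) (h₀₁ : o + v + w ∈ K) (h₁₁ : o + u + v ∈ K)
    {a b : ℝ} (ha : a ∈ Icc 0 1) (hb : b ∈ Icc 0 1) :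
    o + a • u + b • v + min (a + b) (2 - a - b) • w ∈ K := by
  obtain ⟨ha₀, ha₁⟩ := ha
  obtain ⟨hb₀, hb₁⟩ := hb
  rcases le_total (a + b) 1 with hab | hab
  · have hmin : min (a + b) (2 - a - b) = a + b := min_eq_left (by linarith)
    convert hK.smul_add_smul_add_smul_mem h₀₀ h₁₀ h₀₁ (r := 1 - a - b) (by linarith) ha₀ hb₀
      (by ring) using 1
    rw [hmin]
    module
  · have hmin : min (a + b) (2 - a - b) = 2 - a - b := min_eq_right (by linarith)
    convert hK.smul_add_smul_add_smul_mem h₁₁ h₁₀ h₀₁ (r := a + b - 1) (s := 1 - b) (t := 1 - a)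
      (by linarith) (by linarith) (by linarith) (by ring) using 1
    rw [hmin]
    module

end

theorem sq_sub_le_min_add_two_sub {a b : ℝ} (ha : a ∈ Icc 0 1) (hb : b ∈ Icc 0 1) :
    (b - a) ^ 2 ≤ min (a + b) (2 - a - b) := by
  obtain ⟨ha₀, ha₁⟩ := ha
  obtain ⟨hb₀, hb₁⟩ := hb
  exact le_min (by nlinarith) (by nlinarith)

def nonOverlapSet : Set (ℝ × ℝ × ℝ × ℝ × ℝ) :=
  {p | (p.2.1 - p.1)^2 + (p.2.2.2.1 - p.2.2.1)^2 ≥ p.2.2.2.2 ∧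
        0 ≤ p.1 ∧ p.1 ≤ 1 ∧ 0 ≤ p.2.1 ∧ p.2.1 ≤ 1 ∧
        0 ≤ p.2.2.1 ∧ p.2.2.1 ≤ 1 ∧ 0 ≤ p.2.2.2.1 ∧ p.2.2.2.1 ≤ 1}

def nonOverlapPolyhedron : Set (ℝ × ℝ × ℝ × ℝ × ℝ) :=
  {p | p.1 + p.2.1 + p.2.2.1 + p.2.2.2.1 ≥ p.2.2.2.2 ∧
      -p.1 - p.2.1 + p.2.2.1 + p.2.2.2.1 + 2 ≥ p.2.2.2.2 ∧
      p.1 + p.2.1 - p.2.2.1 - p.2.2.2.1 + 2 ≥ p.2.2.2.2 ∧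
      -p.1 - p.2.1 - p.2.2.1 - p.2.2.2.1 + 4 ≥ p.2.2.2.2 ∧
      0 ≤ p.1 ∧ p.1 ≤ 1 ∧ 0 ≤ p.2.1 ∧ p.2.1 ≤ 1 ∧
      0 ≤ p.2.2.1 ∧ p.2.2.1 ≤ 1 ∧ 0 ≤ p.2.2.2.1 ∧ p.2.2.2.1 ≤ 1}

theorem mem_nonOverlapPolyhedron_iff {a b c d g : ℝ} :
    (a, b, c, d, g) ∈ nonOverlapPolyhedron ↔
      g ≤ min (a + b) (2 - a - b) + min (c + d) (2 - c - d) ∧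
        0 ≤ a ∧ a ≤ 1 ∧ 0 ≤ b ∧ b ≤ 1 ∧ 0 ≤ c ∧ c ≤ 1 ∧ 0 ≤ d ∧ d ≤ 1 := by
  simp only [nonOverlapPolyhedron, mem_ofPred_eq, ← min_add_add_right, ← min_add_add_left,
    le_min_iff]
  constructor
  · rintro ⟨h₁, h₂, h₃, h₄, hbox⟩
    exact ⟨⟨⟨by linarith, by linarith⟩, by linarith, by linarith⟩, hbox⟩
  · rintro ⟨⟨⟨h₁, h₂⟩, h₃, h₄⟩, hbox⟩
    exact ⟨by linarith, by linarith, by linarith, by linarith, hbox⟩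

theorem convex_nonOverlapPolyhedron : Convex ℝ nonOverlapPolyhedron := by
  rintro ⟨a, b, c, d, g⟩ ⟨_, _, _, _, _, _, _, _, _, _, _, _⟩
    ⟨a', b', c', d', g'⟩ ⟨_, _, _, _, _, _, _, _, _, _, _, _⟩ s t hs ht hst
  simp only [nonOverlapPolyhedron, Prod.smul_mk, Prod.mk_add_mk, smul_eq_mul, mem_ofPred_eq]
  refine ⟨?_, ?_, ?_, ?_, ?_, ?_, ?_, ?_, ?_, ?_, ?_, ?_⟩ <;> nlinarith

theorem mk_mem_nonOverlapSet {a b c d g : ℝ} (ha : a ∈ Icc 0 1) (hb : b ∈ Icc 0 1)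
    (hc : c ∈ Icc 0 1) (hd : d ∈ Icc 0 1) (hg : g ≤ (b - a) ^ 2 + (d - c) ^ 2) :
    (a, b, c, d, g) ∈ nonOverlapSet :=
  ⟨hg, ha.1, ha.2, hb.1, hb.2, hc.1, hc.2, hd.1, hd.2⟩

theorem nonOverlapSet_subset_nonOverlapPolyhedron : nonOverlapSet ⊆ nonOverlapPolyhedron := by
  rintro ⟨a, b, c, d, g⟩ ⟨hg, ha₀, ha₁, hb₀, hb₁, hc₀, hc₁, hd₀, hd₁⟩
  refine mem_nonOverlapPolyhedron_iff.2 ⟨?_, ha₀, ha₁, hb₀, hb₁, hc₀, hc₁, hd₀, hd₁⟩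
  linarith [sq_sub_le_min_add_two_sub ⟨ha₀, ha₁⟩ ⟨hb₀, hb₁⟩,
    sq_sub_le_min_add_two_sub ⟨hc₀, hc₁⟩ ⟨hd₀, hd₁⟩]

theorem mem_convexHull_nonOverlapSet_of_le_sq_sub_add_min {a b c d g : ℝ}
    (ha : a ∈ Icc 0 1) (hb : b ∈ Icc 0 1) (hc : c ∈ Icc 0 1)
    (hd : d ∈ Icc 0 1) (hg : g ≤ (b - a) ^ 2 + min (c + d) (2 - c - d)) :
    (a, b, c, d, g) ∈ convexHull ℝ nonOverlapSet := by
  have hS := subset_convexHull ℝ nonOverlapSet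
  convert (convex_convexHull ℝ nonOverlapSet).add_smul_add_smul_add_min_smul_mem
    (o := (a, b, 0, 0, g - min (c + d) (2 - c - d))) (u := (0, 0, 1, 0, 0)) (v := (0, 0, 0, 1, 0))
    (w := (0, 0, 0, 0, 1)) (hS ?_) (hS ?_) (hS ?_) (hS ?_) hc hd using 1
  · ext <;> simp
  all_goals
    try simp only [Prod.mk_add_mk, add_zero, zero_add]
    refine mk_mem_nonOverlapSet ha hb (by norm_num) (by norm_num) ?_
    linarith

theorem nonOverlapPolyhedron_subset_convexHull :
    nonOverlapPolyhedron ⊆ convexHull ℝ nonOverlapSet := by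
  rintro ⟨a, b, c, d, g⟩ hp
  obtain ⟨hg, ha₀, ha₁, hb₀, hb₁, hc₀, hc₁, hd₀, hd₁⟩ := mem_nonOverlapPolyhedron_iff.1 hp
  have hc : c ∈ Icc 0 1 := ⟨hc₀, hc₁⟩
  have hd : d ∈ Icc 0 1 := ⟨hd₀, hd₁⟩
  convert (convex_convexHull ℝ nonOverlapSet).add_smul_add_smul_add_min_smul_mem
    (o := (0, 0, c, d, g - min (a + b) (2 - a - b))) (u := (1, 0, 0, 0, 0)) (v := (0, 1, 0, 0, 0))
    (w := (0, 0, 0, 0, 1)) ?_ ?_ ?_ ?_ ⟨ha₀, ha₁⟩ ⟨hb₀, hb₁⟩ using 1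
  · ext <;> simp
  all_goals
    try simp only [Prod.mk_add_mk, add_zero, zero_add]
    refine mem_convexHull_nonOverlapSet_of_le_sq_sub_add_min (by norm_num) (by norm_num) hc hd ?_
    linarith

/-- The convex hull of the set defined by a single non-overlapping constraint
`(b - a)² + (d - c)² ≥ γ` over the unit box equals the polyhedron defined by the four
listed linear inequalities over the unit box.  A point `p : ℝ⁵` is
`(a, b, c, d, γ) = (p.1, p.2.1, p.2.2.1, p.2.2.2.1, p.2.2.2.2)`. -/
theorem stmt_16 :
    convexHull ℝ
      {p : ℝ × ℝ × ℝ × ℝ × ℝ |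
        (p.2.1 - p.1)^2 + (p.2.2.2.1 - p.2.2.1)^2 ≥ p.2.2.2.2 ∧
        0 ≤ p.1 ∧ p.1 ≤ 1 ∧ 0 ≤ p.2.1 ∧ p.2.1 ≤ 1 ∧
        0 ≤ p.2.2.1 ∧ p.2.2.1 ≤ 1 ∧ 0 ≤ p.2.2.2.1 ∧ p.2.2.2.1 ≤ 1} =
    {p : ℝ × ℝ × ℝ × ℝ × ℝ |
      p.1 + p.2.1 + p.2.2.1 + p.2.2.2.1 ≥ p.2.2.2.2 ∧
      -p.1 - p.2.1 + p.2.2.1 + p.2.2.2.1 + 2 ≥ p.2.2.2.2 ∧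
      p.1 + p.2.1 - p.2.2.1 - p.2.2.2.1 + 2 ≥ p.2.2.2.2 ∧
      -p.1 - p.2.1 - p.2.2.1 - p.2.2.2.1 + 4 ≥ p.2.2.2.2 ∧
      0 ≤ p.1 ∧ p.1 ≤ 1 ∧ 0 ≤ p.2.1 ∧ p.2.1 ≤ 1 ∧
      0 ≤ p.2.2.1 ∧ p.2.2.1 ≤ 1 ∧ 0 ≤ p.2.2.2.1 ∧ p.2.2.2.1 ≤ 1} :=
  (convexHull_min nonOverlapSet_subset_nonOverlapPolyhedron convex_nonOverlapPolyhedron).antisymm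
    nonOverlapPolyhedron_subset_convexHull
end

section
/- Let n ≥ 2 and let x̂ ∈ {0,1}^n with k := Σ_{j=1}^n x̂_j, and set X̂_{ij} := x̂_i x̂_j for 1 ≤ i < j ≤ n. Define Q^b := {(x, X) ∈ ℝ^n × ℝ^{n(n−1)/2} : X_{ij} ≥ x_i x_j for all 1 ≤ i < j ≤ n, x ∈ [0,1]^n}, and define the linear functional L(x, X) := −Σ_{1≤i<j≤n} X_{ij} + Σ_{j=1}^n d_j x_j where d_j := −1 if x̂_j = 0 and d_j := k if x̂_j = 1. Then (x̂, X̂) ∈ Q^b, and L(x, X) < L(x̂, X̂) for every (x, X) in the convex hull of Q^b with (x, X) ≠ (x̂, X̂); i.e., (x̂, X̂) is the unique maximizer of L over conv(Q^b), so each binary point (x̂, x̂ x̂ᵀ) is a vertex of conv(Q^b). -/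
/-!
Since `L` is linear, it suffices that `(x̂, X̂)` is the strict maximizer of `L` on `Q^b` itself.
There, raising `X` above `x xᵀ` only lowers `L`, so it remains to compare `g(x) = L(x, x xᵀ)` with
`g(x̂)` over the box; the bound `2 ∑_{i<j} x_i x_j ≥ (∑ x)² - ∑ x` (from `x_i² ≤ x_i`) gives
`g(x̂) - g(x) ≥ ½ ∑ |x_j - x̂_j|`.
-/
open Finset

section
variable {𝕜 E : Type*} [Field 𝕜] [LinearOrder 𝕜] [IsStrictOrderedRing 𝕜] [AddCommGroup E] [Module 𝕜 E]

theorem IsLinearMap.apply_lt_of_mem_convexHull {f : E → 𝕜} (hf : IsLinearMap 𝕜 f)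
    {s : Set E} {p q : E} (hs : ∀ x ∈ s, x ≠ p → f x < f p) (hq : q ∈ convexHull 𝕜 s)
    (hqp : q ≠ p) : f q < f p := by
  have hconvex : Convex 𝕜 (insert p {x | f x < f p}) := by
    refine convex_iff_openSegment_subset.2 fun x hx y hy z ⟨a, b, ha, hb, hab, hz⟩ => ?_
    subst hz
    obtain rfl : a = 1 - b := eq_sub_of_add_eq hab
    rcases hx with rfl | hx <;> rcases hy with rfl | hy
    · left
      rw [← add_smul, sub_add_cancel, one_smul]
    all_goals
      right
      simp only [Set.mem_ofPred_eq, hf.map_add, hf.map_smul, smul_eq_mul] at *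
    · linarith [mul_lt_mul_of_pos_left hy hb]
    · linarith [mul_lt_mul_of_pos_left hx ha]
    · linarith [mul_lt_mul_of_pos_left hx ha, mul_lt_mul_of_pos_left hy hb]
  have hsub : s ⊆ insert p {x | f x < f p} := fun x hx =>
    (eq_or_ne x p).imp id (hs x hx)
  exact (convexHull_min hsub hconvex hq).resolve_left hqp
end

section
variable {ι : Type*} [Fintype ι] [LinearOrder ι]

theorem two_mul_sum_pairs_mul {R : Type*} [CommRing R] (y : ι → R) :
    2 * ∑ q : {q : ι × ι // q.1 < q.2}, y q.1.1 * y q.1.2 = (∑ i, y i) ^ 2 - ∑ i, y i ^ 2 := by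
  have hpairs : ∑ q : {q : ι × ι // q.1 < q.2}, y q.1.1 * y q.1.2
      = ∑ i, ∑ j, if i < j then y i * y j else 0 := by
    rw [← Fintype.sum_prod_type', ← sum_filter]
    exact (sum_subtype (p := fun q : ι × ι => q.1 < q.2) _ (fun _ => mem_filter_univ _)
      (fun q => y q.1 * y q.2)).symm
  have hsplit (i j : ι) : y i * y j = (if i < j then y i * y j else 0) +
      (if j < i then y j * y i else 0) + if i = j then y i ^ 2 else 0 := by
    rcases lt_trichotomy i j with h | rfl | h
    · simp [h, h.not_gt, h.ne]
    · simp [sq]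
    · simp [h, h.not_gt, h.ne', mul_comm]
  have hswap : ∑ i, ∑ j, (if j < i then y j * y i else 0)
      = ∑ i, ∑ j, if i < j then y i * y j else 0 := sum_comm
  have hdiag : ∑ i, ∑ j, (if i = j then y i ^ 2 else 0) = ∑ i, y i ^ 2 := by simp
  calc 2 * ∑ q : {q : ι × ι // q.1 < q.2}, y q.1.1 * y q.1.2
      = ∑ i, ∑ j, y i * y j - ∑ i, y i ^ 2 := by
        conv_rhs => enter [1, 2, i, 2, j]; rw [hsplit i j]
        simp only [sum_add_distrib, hswap, hdiag, hpairs]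
        ring
    _ = (∑ i, y i) ^ 2 - ∑ i, y i ^ 2 := by rw [sq, sum_mul_sum]

/-- The functional `L` evaluated at `X = x xᵀ`, with `d_j` written as `(k + 1) x̂_j - 1`. -/
noncomputable def vertexObjective (xh x : ι → ℝ) : ℝ :=
  (∑ i, xh i + 1) * ∑ i, xh i * x i - ∑ i, x i - ∑ q : {q : ι × ι // q.1 < q.2}, x q.1.1 * x q.1.2

/-- With `k = ∑ x̂`, `S = ∑ x` and `T = ∑ x̂ x` one has `∑ |x - x̂| = (k - T) + (S - T)` and
`2 ∑_{i<j} x_i x_j ≥ S² - S`, which reduces the claim to `(k - T)² + (S² - T²) ≥ 0`. -/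
theorem vertexObjective_add_sum_abs_sub_le {xh x : ι → ℝ} (hxh : ∀ i, xh i = 0 ∨ xh i = 1)
    (hx : ∀ i, x i ∈ Set.Icc 0 1) :
    vertexObjective xh x + (∑ i, |x i - xh i|) / 2 ≤ vertexObjective xh xh := by
  have habs (i : ι) : |x i - xh i| = xh i + x i - 2 * (xh i * x i) := by
    rcases hxh i with h | h
    · simp [h, abs_of_nonneg (hx i).1]
    · rw [h, abs_of_nonpos (by linarith [(hx i).2])]
      ring
  have hxh_sq (i : ι) : xh i * xh i = xh i := by rcases hxh i with h | h <;> simp [h]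
  have hx_sq (i : ι) : x i ^ 2 ≤ x i := by nlinarith [(hx i).1, (hx i).2]
  have hle_xh (i : ι) : xh i * x i ≤ xh i := by
    rcases hxh i with h | h <;> simp [h, (hx i).2]
  have hle_x (i : ι) : xh i * x i ≤ x i := by
    rcases hxh i with h | h <;> simp [h, (hx i).1]
  have hnonneg (i : ι) : 0 ≤ xh i * x i := by
    rcases hxh i with h | h <;> simp [h, (hx i).1]
  have hpx := two_mul_sum_pairs_mul x
  have hpxh := two_mul_sum_pairs_mul xh
  have hT_le_k := sum_le_sum fun i (_ : i ∈ univ) => hle_xh i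
  have hT_le_S := sum_le_sum fun i (_ : i ∈ univ) => hle_x i
  have hT_nonneg := sum_nonneg fun i (_ : i ∈ univ) => hnonneg i
  have hsq := sum_le_sum fun i (_ : i ∈ univ) => hx_sq i
  simp only [vertexObjective, sum_congr rfl fun i _ => habs i, sum_congr rfl fun i _ => hxh_sq i,
    sum_sub_distrib, sum_add_distrib, ← mul_sum] at *
  simp only [sq, sum_congr rfl fun i _ => hxh_sq i] at hpxh
  nlinarith

theorem vertexObjective_lt {xh x : ι → ℝ} (hxh : ∀ i, xh i = 0 ∨ xh i = 1)
    (hx : ∀ i, x i ∈ Set.Icc 0 1) (hne : x ≠ xh) :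
    vertexObjective xh x < vertexObjective xh xh := by
  obtain ⟨i, hi⟩ := Function.ne_iff.1 hne
  have hpos : 0 < ∑ i, |x i - xh i| :=
    sum_pos' (fun i _ => abs_nonneg _) ⟨i, mem_univ i, abs_pos.2 (sub_ne_zero.2 hi)⟩
  linarith [vertexObjective_add_sum_abs_sub_le hxh hx]

theorem vertexObjective_sub_sum_lt {xh x : ι → ℝ} {X : {q : ι × ι // q.1 < q.2} → ℝ}
    (hxh : ∀ i, xh i = 0 ∨ xh i = 1) (hx : ∀ i, x i ∈ Set.Icc 0 1)
    (hX : ∀ q, x q.1.1 * x q.1.2 ≤ X q) (hne : (x, X) ≠ (xh, fun q => xh q.1.1 * xh q.1.2)) :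
    vertexObjective xh x - ∑ q, (X q - x q.1.1 * x q.1.2) < vertexObjective xh xh := by
  have hexcess : 0 ≤ ∑ q, (X q - x q.1.1 * x q.1.2) := sum_nonneg fun q _ => sub_nonneg.2 (hX q)
  by_cases hx_eq : x = xh
  · subst hx_eq
    have hX_ne : X ≠ fun q => x q.1.1 * x q.1.2 := by
      rintro rfl
      exact hne rfl
    obtain ⟨q, hq⟩ := Function.ne_iff.1 hX_ne
    have hpos : 0 < ∑ q, (X q - x q.1.1 * x q.1.2) :=
      sum_pos' (fun q _ => sub_nonneg.2 (hX q)) ⟨q, mem_univ q, sub_pos.2 ((hX q).lt_of_ne' hq)⟩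
    linarith
  · linarith [vertexObjective_lt hxh hx hx_eq]

end

theorem stmt_17_general (n : ℕ)
    (xh : Fin n → ℝ) (hxh : ∀ i, xh i = 0 ∨ xh i = 1)
    (k : ℝ) (hk : k = ∑ j, xh j)
    (Xh : {q : Fin n × Fin n // q.1 < q.2} → ℝ)
    (hXh : ∀ q : {q : Fin n × Fin n // q.1 < q.2}, Xh q = xh q.1.1 * xh q.1.2)
    (Qb : Set ((Fin n → ℝ) × ({q : Fin n × Fin n // q.1 < q.2} → ℝ)))
    (hQb : Qb = {p | (∀ q : {q : Fin n × Fin n // q.1 < q.2},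
        p.2 q ≥ p.1 q.1.1 * p.1 q.1.2) ∧ ∀ i, 0 ≤ p.1 i ∧ p.1 i ≤ 1})
    (d : Fin n → ℝ) (hd : ∀ j, d j = if xh j = 1 then k else -1)
    (L : (Fin n → ℝ) × ({q : Fin n × Fin n // q.1 < q.2} → ℝ) → ℝ)
    (hL : ∀ p, L p = -(∑ q : {q : Fin n × Fin n // q.1 < q.2}, p.2 q) + ∑ j, d j * p.1 j) :
    (xh, Xh) ∈ Qb ∧
    ∀ p ∈ convexHull ℝ Qb, p ≠ (xh, Xh) → L p < L (xh, Xh) := by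
  obtain rfl : Xh = fun q => xh q.1.1 * xh q.1.2 := funext hXh
  subst hQb hk
  have hd_eq (j : Fin n) : d j = (∑ i, xh i + 1) * xh j - 1 := by
    rcases hxh j with h | h <;> simp [hd, h]
  have hL_eq (p : (Fin n → ℝ) × ({q : Fin n × Fin n // q.1 < q.2} → ℝ)) :
      L p = vertexObjective xh p.1 - ∑ q, (p.2 q - p.1 q.1.1 * p.1 q.1.2) := by
    simp only [hL, hd_eq, vertexObjective, sum_sub_distrib, sub_mul, mul_assoc, ← mul_sum, one_mul]
    ring
  have hlin : IsLinearMap ℝ L :=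
    ⟨fun a b => by
      simp only [hL, Prod.fst_add, Prod.snd_add, Pi.add_apply, sum_add_distrib, mul_add]
      ring,
     fun c a => by
      simp only [hL, Prod.smul_fst, Prod.smul_snd, Pi.smul_apply, smul_eq_mul, ← mul_sum,
        mul_left_comm (d _)]
      ring⟩
  refine ⟨⟨fun q => le_rfl, fun i => by rcases hxh i with h | h <;> simp [h]⟩,
    fun p hp hne => hlin.apply_lt_of_mem_convexHull ?_ hp hne⟩
  rintro ⟨x, X⟩ ⟨hX, hx⟩ hne
  rw [hL_eq, hL_eq]
  simpa using vertexObjective_sub_sum_lt hxh hx hX hne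

/-- Each binary point `(x̂, x̂ x̂ᵀ)` is a vertex of `conv(Q^b)`, where
`Q^b = {(x, X) : X_{ij} ≥ x_i x_j for i < j, x ∈ [0,1]^n}`: it lies in `Q^b` and it is
the unique maximizer over `conv(Q^b)` of the linear functional
`L(x, X) = -Σ_{i<j} X_{ij} + Σ_j d_j x_j`, with `d_j = k` if `x̂_j = 1` and `d_j = -1`
if `x̂_j = 0`, where `k = Σ_j x̂_j`.  Pairs `i < j` are indexed by the subtype
`{q : Fin n × Fin n // q.1 < q.2}` (of cardinality `n(n-1)/2`). -/
theorem stmt_17 (n : ℕ) (hn : 2 ≤ n)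
    (xh : Fin n → ℝ) (hxh : ∀ i, xh i = 0 ∨ xh i = 1)
    (k : ℝ) (hk : k = ∑ j, xh j)
    (Xh : {q : Fin n × Fin n // q.1 < q.2} → ℝ)
    (hXh : ∀ q : {q : Fin n × Fin n // q.1 < q.2}, Xh q = xh q.1.1 * xh q.1.2)
    (Qb : Set ((Fin n → ℝ) × ({q : Fin n × Fin n // q.1 < q.2} → ℝ)))
    (hQb : Qb = {p | (∀ q : {q : Fin n × Fin n // q.1 < q.2},
        p.2 q ≥ p.1 q.1.1 * p.1 q.1.2) ∧ ∀ i, 0 ≤ p.1 i ∧ p.1 i ≤ 1})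
    (d : Fin n → ℝ) (hd : ∀ j, d j = if xh j = 1 then k else -1)
    (L : (Fin n → ℝ) × ({q : Fin n × Fin n // q.1 < q.2} → ℝ) → ℝ)
    (hL : ∀ p, L p = -(∑ q : {q : Fin n × Fin n // q.1 < q.2}, p.2 q) + ∑ j, d j * p.1 j) :
    (xh, Xh) ∈ Qb ∧
    ∀ p ∈ convexHull ℝ Qb, p ≠ (xh, Xh) → L p < L (xh, Xh) :=
  stmt_17_general n xh hxh k hk Xh hXh Qb hQb d hd L hL
end

section
/- Let n ≥ 2, let x, y ∈ [0,1]^n and γ ∈ ℝ. Then the following are equivalent: (1) there exist real numbers X_{ij}, Y_{ij} for 1 ≤ i ≤ j ≤ n such that for all 1 ≤ i < j ≤ n: X_{ii} − 2X_{ij} + X_{jj} + Y_{ii} − 2Y_{ij} + Y_{jj} ≥ γ, X_{ij} ≥ 0, X_{ij} ≥ x_i + x_j − 1, Y_{ij} ≥ 0, Y_{ij} ≥ y_i + y_j − 1, and for all i: X_{ii} ≤ x_i, Y_{ii} ≤ y_i; (2) for all 1 ≤ i < j ≤ n: x_i + x_j + y_i + y_j ≥ γ, −x_i − x_j + y_i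 + y_j + 2 ≥ γ, x_i + x_j − y_i − y_j + 2 ≥ γ, and −x_i − x_j − y_i − y_j + 4 ≥ γ. In other words, the projection of the first-level RLT relaxation set S onto the (x, y, γ) space equals the feasible region of the single-row LP relaxation (TW). -/
/-!
For a pair `i < j` only `X i i, X j j, X i j` (and likewise for `Y`) interact, and
`X i i - 2 * X i j + X j j` is maximised by taking `X i i = x i`, `X j j = x j` and `X i j` at its
McCormick lower bound `max 0 (x i + x j - 1)`; the maximum is `min s (2 - s)` for
`s = x i + x j`. So the lifted system is solvable iff `γ ≤ min s (2 - s) + min t (2 - t)` with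
`t = y i + y j` for every pair, and expanding the two minima gives the four (TW) inequalities.
-/

theorem le_min_add_min_iff {α : Type*} [AddCommGroup α] [LinearOrder α] [IsOrderedAddMonoid α]
    {a b c d γ : α} :
    γ ≤ min a b + min c d ↔ γ ≤ a + c ∧ γ ≤ b + c ∧ γ ≤ a + d ∧ γ ≤ b + d := by
  rw [← min_add_add_right, ← min_add_add_left, ← min_add_add_left]
  simp only [le_min_iff]
  tauto

theorem sub_two_mul_add_le_min {a b p q m : ℝ} (hp : p ≤ a) (hq : q ≤ b) (hm₀ : 0 ≤ m)
    (hm₁ : a + b - 1 ≤ m) : p - 2 * m + q ≤ min (a + b) (2 - (a + b)) :=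
  le_min (by linarith) (by linarith)

theorem sub_two_mul_max_add (a b : ℝ) :
    a - 2 * max 0 (a + b - 1) + b = min (a + b) (2 - (a + b)) := by
  rcases le_total (a + b) 1 with h | h
  · rw [max_eq_left (by linarith), min_eq_left (by linarith)]; ring
  · rw [max_eq_right (by linarith), min_eq_right (by linarith)]; ring

theorem tw_pair_iff (a b c d γ : ℝ) :
    (a + b + c + d ≥ γ ∧ -a - b + c + d + 2 ≥ γ ∧ a + b - c - d + 2 ≥ γ ∧
      -a - b - c - d + 4 ≥ γ) ↔
    γ ≤ min (a + b) (2 - (a + b)) + min (c + d) (2 - (c + d)) := by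
  rw [le_min_add_min_iff]
  constructor <;> rintro ⟨h₁, h₂, h₃, h₄⟩ <;> refine ⟨?_, ?_, ?_, ?_⟩ <;> linarith

noncomputable def mccormickLift {n : ℕ} (x : Fin n → ℝ) (i j : Fin n) : ℝ :=
  if i = j then x i else max 0 (x i + x j - 1)

theorem stmt_18_general (n : ℕ) (x y : Fin n → ℝ) (γ : ℝ) :
    (∃ X Y : Fin n → Fin n → ℝ,
      (∀ i j : Fin n, i < j →
        X i i - 2 * X i j + X j j + Y i i - 2 * Y i j + Y j j ≥ γ ∧
        X i j ≥ 0 ∧ X i j ≥ x i + x j - 1 ∧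
        Y i j ≥ 0 ∧ Y i j ≥ y i + y j - 1) ∧
      (∀ i, X i i ≤ x i ∧ Y i i ≤ y i)) ↔
    (∀ i j : Fin n, i < j →
      x i + x j + y i + y j ≥ γ ∧
      -x i - x j + y i + y j + 2 ≥ γ ∧
      x i + x j - y i - y j + 2 ≥ γ ∧
      -x i - x j - y i - y j + 4 ≥ γ) := by
  constructor
  · rintro ⟨X, Y, hpair, hdiag⟩ i j hij
    obtain ⟨hγ, hX₀, hX₁, hY₀, hY₁⟩ := hpair i j hij
    have hX := sub_two_mul_add_le_min (hdiag i).1 (hdiag j).1 hX₀ hX₁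
    have hY := sub_two_mul_add_le_min (hdiag i).2 (hdiag j).2 hY₀ hY₁
    rw [tw_pair_iff]
    linarith
  · intro htw
    refine ⟨mccormickLift x, mccormickLift y, fun i j hij => ?_, fun i => by simp [mccormickLift]⟩
    simp only [mccormickLift, if_true, if_neg hij.ne]
    have hX := sub_two_mul_max_add (x i) (x j)
    have hY := sub_two_mul_max_add (y i) (y j)
    have hγ := (tw_pair_iff _ _ _ _ γ).1 (htw i j hij)
    exact ⟨by linarith, le_max_left .., le_max_right .., le_max_left .., le_max_right ..⟩

/-- The projection of the first-level RLT relaxation set onto the `(x, y, γ)` space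
equals the feasible region of the single-row LP relaxation (TW): for `x, y ∈ [0,1]^n`,
suitable lifted variables `X, Y` exist iff the four (TW) inequalities hold for all
pairs `i < j`. -/
theorem stmt_18 (n : ℕ) (hn : 2 ≤ n) (x y : Fin n → ℝ) (γ : ℝ)
    (hx : ∀ i, 0 ≤ x i ∧ x i ≤ 1) (hy : ∀ i, 0 ≤ y i ∧ y i ≤ 1) :
    (∃ X Y : Fin n → Fin n → ℝ,
      (∀ i j : Fin n, i < j →
        X i i - 2 * X i j + X j j + Y i i - 2 * Y i j + Y j j ≥ γ ∧
        X i j ≥ 0 ∧ X i j ≥ x i + x j - 1 ∧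
        Y i j ≥ 0 ∧ Y i j ≥ y i + y j - 1) ∧
      (∀ i, X i i ≤ x i ∧ Y i i ≤ y i)) ↔
    (∀ i j : Fin n, i < j →
      x i + x j + y i + y j ≥ γ ∧
      -x i - x j + y i + y j + 2 ≥ γ ∧
      x i + x j - y i - y j + 2 ≥ γ ∧
      -x i - x j - y i - y j + 4 ≥ γ) :=
  stmt_18_general n x y γ
end

section
/- Let n ≥ 3 be an odd integer. Then for all integers m and α with 3 ≤ m ≤ n and 1 ≤ α ≤ max{m−2, 1}: α · m · (1 + 1/n)/2 − (m(m−1)/2) · (1 + 1/n)/4 ≤ α(α+1)/2. Equivalently, the symmetric point given by x̃_i := (1 + 1/n)/2 for all i ∈ {1,…,n} and X̃_{ij} := (1 + 1/n)/4 for all 1 ≤ i < j ≤ n satisfies every clique inequality: for every subset S ⊆ {1,…,n} with |S| = m ≥ 3 and every integer α with 1 ≤ α ≤ max{m−2,1}, α·Σ_{i∈S} x̃_i − Σ_{i<j, i,j∈S} X̃_{ij} ≤ α(α+1)/2. -/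
/-!
Clearing denominators, the inequality for `|S| = m` reads
`(n + 1) m (4α - m + 1) ≤ 4 n α (α + 1)`. With `d = m - 2α` the gap is
`(n - m)((d - 1)² + m - 1) + m (d² - 1)`, which is nonnegative unless `d = 0`. In that case
`m = 2α` is even, so `m < n` because `n` is odd, and the gap `(n - m - 1) m` is again
nonnegative.
-/

open Finset

theorem Int.succ_mul_mul_four_mul_sub_add_one_le {n m a : ℤ} (hm : 1 ≤ m) (hmn : m ≤ n)
    (hodd : Odd n) : (n + 1) * m * (4 * a - m + 1) ≤ 4 * n * a * (a + 1) := by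
  by_cases hd : m = 2 * a
  · have hmn' : m + 1 ≤ n := by
      obtain ⟨k, rfl⟩ := hodd
      omega
    subst hd
    linear_combination
      mul_nonneg (by omega : (0 : ℤ) ≤ 2 * a) (by omega : (0 : ℤ) ≤ n - 2 * a - 1)
  · have hd' : 1 ≤ (m - 2 * a) ^ 2 := by
      have := sq_pos_of_ne_zero (sub_ne_zero.mpr hd)
      omega
    have gap : 4 * n * a * (a + 1) - (n + 1) * m * (4 * a - m + 1)
        = (n - m) * ((m - 2 * a - 1) ^ 2 + m - 1) + m * ((m - 2 * a) ^ 2 - 1) := by ring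
    rw [← sub_nonneg, gap]
    have hsq := sq_nonneg (m - 2 * a - 1)
    exact add_nonneg (mul_nonneg (by linarith) (by linarith))
      (mul_nonneg (by linarith) (by linarith))

theorem Finset.two_mul_sum_sum_ite_lt {ι R : Type*} [LinearOrder ι] [CommRing R]
    (S : Finset ι) (c : R) :
    2 * ∑ i ∈ S, ∑ j ∈ S, (if i < j then c else 0) = #S * (#S - 1) * c := by
  have split : ∀ i j : ι, c = (if i < j then c else 0) + (if j < i then c else 0)
      + (if i = j then c else 0) := by
    intro i j
    rcases lt_trichotomy i j with h | rfl | h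
    · simp [h, h.ne, h.not_gt]
    · simp
    · simp [h, h.ne', h.not_gt]
  have total : (#S : R) * #S * c = ∑ i ∈ S, ∑ j ∈ S, (if i < j then c else 0)
      + ∑ i ∈ S, ∑ j ∈ S, (if j < i then c else 0) + #S * c :=
    calc (#S : R) * #S * c = ∑ i ∈ S, ∑ j ∈ S, c := by simp [mul_assoc]
      _ = _ := sum_congr rfl fun i _ => sum_congr rfl fun j _ => split i j
      _ = _ := by simp [sum_add_distrib]
  rw [sum_comm (f := fun i j => if j < i then c else 0)] at total
  linear_combination -total

theorem symmetricPoint_clique_bound {n m α : ℕ} (hm : 1 ≤ m) (hmn : m ≤ n) (hodd : Odd n) :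
    (α : ℝ) * (m : ℝ) * ((1 + 1 / (n : ℝ)) / 2)
      - ((m : ℝ) * ((m : ℝ) - 1) / 2) * ((1 + 1 / (n : ℝ)) / 4)
      ≤ (α : ℝ) * ((α : ℝ) + 1) / 2 := by
  have hn : (0 : ℝ) < n := by exact_mod_cast hodd.pos
  have key : ((n : ℝ) + 1) * m * (4 * α - m + 1) ≤ 4 * n * α * (α + 1) := by
    exact_mod_cast Int.succ_mul_mul_four_mul_sub_add_one_le (n := n) (m := m) (a := α)
      (by exact_mod_cast hm) (by exact_mod_cast hmn) (by exact_mod_cast hodd)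
  rw [← mul_le_mul_iff_left₀ (by positivity : (0 : ℝ) < 8 * n)]
  calc _ = ((n : ℝ) + 1) * m * (4 * α - m + 1) := by field_simp; ring
    _ ≤ 4 * n * α * (α + 1) := key
    _ = _ := by ring

theorem stmt_19_general (n : ℕ) (hodd : Odd n) :
    (∀ m α : ℕ, 3 ≤ m → m ≤ n → 1 ≤ α → α ≤ max (m - 2) 1 →
      (α : ℝ) * (m : ℝ) * ((1 + 1 / (n : ℝ)) / 2)
        - ((m : ℝ) * ((m : ℝ) - 1) / 2) * ((1 + 1 / (n : ℝ)) / 4)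
        ≤ (α : ℝ) * ((α : ℝ) + 1) / 2) ∧
    (∀ S : Finset (Fin n), 3 ≤ S.card → ∀ α : ℕ, 1 ≤ α → α ≤ max (S.card - 2) 1 →
      (α : ℝ) * (∑ _i ∈ S, (1 + 1 / (n : ℝ)) / 2)
        - (∑ i ∈ S, ∑ j ∈ S, if i < j then (1 + 1 / (n : ℝ)) / 4 else 0)
        ≤ (α : ℝ) * ((α : ℝ) + 1) / 2) := by
  refine ⟨fun m α hm hmn _ _ => symmetricPoint_clique_bound (by omega) hmn hodd,
    fun S hS α _ _ => ?_⟩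
  have hSn : #S ≤ n := by simpa using S.card_le_univ
  have bound := symmetricPoint_clique_bound (α := α) (by omega) hSn hodd
  have pairs := S.two_mul_sum_sum_ite_lt ((1 + 1 / (n : ℝ)) / 4)
  rw [sum_const, nsmul_eq_mul]
  linear_combination bound - pairs / 2

/-- For odd `n ≥ 3`, the symmetric point `x̃_i = (1 + 1/n)/2`, `X̃_{ij} = (1 + 1/n)/4`
satisfies every clique inequality: the numeric inequality
`α m (1 + 1/n)/2 - (m(m-1)/2)(1 + 1/n)/4 ≤ α(α+1)/2` holds for all integers
`3 ≤ m ≤ n`, `1 ≤ α ≤ max (m-2) 1`, and equivalently every clique inequality over a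
subset `S` of cardinality `m ≥ 3` holds at this point. -/
theorem stmt_19 (n : ℕ) (hn : 3 ≤ n) (hodd : Odd n) :
    (∀ m α : ℕ, 3 ≤ m → m ≤ n → 1 ≤ α → α ≤ max (m - 2) 1 →
      (α : ℝ) * (m : ℝ) * ((1 + 1 / (n : ℝ)) / 2)
        - ((m : ℝ) * ((m : ℝ) - 1) / 2) * ((1 + 1 / (n : ℝ)) / 4)
        ≤ (α : ℝ) * ((α : ℝ) + 1) / 2) ∧
    (∀ S : Finset (Fin n), 3 ≤ S.card → ∀ α : ℕ, 1 ≤ α → α ≤ max (S.card - 2) 1 →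
      (α : ℝ) * (∑ _i ∈ S, (1 + 1 / (n : ℝ)) / 2)
        - (∑ i ∈ S, ∑ j ∈ S, if i < j then (1 + 1 / (n : ℝ)) / 4 else 0)
        ≤ (α : ℝ) * ((α : ℝ) + 1) / 2) :=
  stmt_19_general n hodd
end
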